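/- arXiv:1907.01440 — 12 statements merged into one kernel-verified Lean document; each statement's English description precedes it below -/
import Mathlib

section
/- Let G be a group generated by a finite symmetric subset S (i.e. S = S⁻¹) containing the identity, acting transitively on a nonempty set X, and let P be the averaging (Markov) operator Pf(x) = (1/|S|)·Σ_{s∈S} f(s•x). Then inf{λ > 0 : there exists f : X → ℝ with f(x) > 0 for all x and Pf(x) ≤ λ·f(x) for all x} = 1 if and only if for every f : X → ℝ with f > 0 pointwise and Pf ≤ f pointwise there exists a sequence (E_n) in X such that for every g ∈ G, f(g•E_n)/f(E_n) → 1 as n → ∞. -/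
open Filter
namespace NorthshieldAux



variable {G X : Type*} [Group G] [MulAction G X]

/-- The Markov (averaging) operator. -/
noncomputable def T (S : Finset G) (v : X → ℝ) : X → ℝ :=
  fun x => (∑ s ∈ S, v (s • x)) / S.card

variable {S : Finset G}

lemma card_pos' (hS1 : (1 : G) ∈ S) : (0 : ℝ) < S.card := by
  have : 0 < S.card := Finset.card_pos.mpr ⟨1, hS1⟩
  exact_mod_cast this

lemma one_le_card (hS1 : (1 : G) ∈ S) : (1 : ℝ) ≤ S.card := by
  have : 1 ≤ S.card := Finset.card_pos.mpr ⟨1, hS1⟩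
  exact_mod_cast this

lemma T_mono (hS1 : (1 : G) ∈ S) {v w : X → ℝ} (h : ∀ x, v x ≤ w x) (x : X) :
    T S v x ≤ T S w x := by
  unfold T
  exact div_le_div_of_nonneg_right (Finset.sum_le_sum fun s _ => h (s • x)) (card_pos' hS1).le
    |>.trans_eq rfl

lemma T_pos (hS1 : (1 : G) ∈ S) {v : X → ℝ} (h : ∀ x, 0 < v x) (x : X) : 0 < T S v x := by
  unfold T
  exact div_pos (Finset.sum_pos (fun s _ => h (s • x)) ⟨1, hS1⟩) (card_pos' hS1)

lemma iter_pos (hS1 : (1 : G) ∈ S) {v : X → ℝ} (h : ∀ x, 0 < v x) (k : ℕ) (x : X) :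
    0 < (T S)^[k] v x := by
  induction k generalizing v with
  | zero => exact h x
  | succ k ih =>
    rw [Function.iterate_succ_apply]
    exact ih (T_pos hS1 h)

lemma iter_le (hS1 : (1 : G) ∈ S) {u v : X → ℝ} (hu : ∀ x, T S u x ≤ u x)
    (h : ∀ x, v x ≤ u x) (k : ℕ) (x : X) : (T S)^[k] v x ≤ u x := by
  induction k generalizing v with
  | zero => exact h x
  | succ k ih =>
    rw [Function.iterate_succ_apply]
    exact ih fun z => (T_mono hS1 h z).trans (hu z)




lemma exists_word (hSsymm : ∀ s ∈ S, s⁻¹ ∈ S)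
    (hSgen : Subgroup.closure (S : Set G) = ⊤) (g : G) :
    ∃ l : List G, (∀ y ∈ l, y ∈ S) ∧ l.prod = g := by
  have hg : g ∈ Subgroup.closure (S : Set G) := by rw [hSgen]; trivial
  induction hg using Subgroup.closure_induction with
  | mem x hx => exact ⟨[x], by simpa using hx, by simp⟩
  | one => exact ⟨[], by simp, by simp⟩
  | mul x y _ _ hx hy =>
    obtain ⟨l1, h1, e1⟩ := hx
    obtain ⟨l2, h2, e2⟩ := hy
    refine ⟨l1 ++ l2, ?_, by simp [e1, e2]⟩
    intro z hz
    rcases List.mem_append.mp hz with h | h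
    · exact h1 z h
    · exact h2 z h
  | inv x _ hx =>
    obtain ⟨l, h1, e1⟩ := hx
    refine ⟨(l.map fun z => z⁻¹).reverse, ?_, ?_⟩
    · intro z hz
      simp only [List.mem_reverse, List.mem_map] at hz
      obtain ⟨w, hw, rfl⟩ := hz
      exact hSsymm w (h1 w hw)
    · rw [← List.prod_inv_reverse, e1]

lemma pad_word (hS1 : (1 : G) ∈ S) {l : List G} (hl : ∀ y ∈ l, y ∈ S) {N : ℕ}
    (h : l.length ≤ N) :
    ∃ l' : List G, (∀ y ∈ l', y ∈ S) ∧ l'.length = N ∧ l'.prod = l.prod := by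
  refine ⟨l ++ List.replicate (N - l.length) 1, ?_, ?_, ?_⟩
  · intro z hz
    rcases List.mem_append.mp hz with h | h
    · exact hl z h
    · rw [List.eq_of_mem_replicate h]; exact hS1
  · simp; omega
  · simp

lemma inv_word (hSsymm : ∀ s ∈ S, s⁻¹ ∈ S) {l : List G} (hl : ∀ y ∈ l, y ∈ S) :
    ∃ l' : List G, (∀ y ∈ l', y ∈ S) ∧ l'.length = l.length ∧ l'.prod = l.prod⁻¹ := by
  refine ⟨(l.map fun z => z⁻¹).reverse, ?_, by simp, (List.prod_inv_reverse l).symm⟩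
  intro z hz
  simp only [List.mem_reverse, List.mem_map] at hz
  obtain ⟨w, hw, rfl⟩ := hz
  exact hSsymm w (hl w hw)





lemma sum_le_of_superharm (hS1 : (1 : G) ∈ S) {f : X → ℝ} (hP : ∀ x, T S f x ≤ f x) (x : X) :
    ∑ s ∈ S, f (s • x) ≤ S.card * f x := by
  have := hP x
  unfold T at this
  rwa [div_le_iff₀ (card_pos' hS1), mul_comm] at this

lemma step_lower (hS1 : (1 : G) ∈ S) (hSsymm : ∀ s ∈ S, s⁻¹ ∈ S) {f : X → ℝ}
    (hf : ∀ x, 0 < f x) (hP : ∀ x, T S f x ≤ f x) {s : G} (hs : s ∈ S) (z : X) :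
    f z ≤ S.card * f (s • z) := by
  have h1 : f (s⁻¹ • s • z) ≤ ∑ s' ∈ S, f (s' • s • z) :=
    Finset.single_le_sum (fun s' _ => (hf (s' • s • z)).le) (hSsymm s hs)
  rw [inv_smul_smul] at h1
  exact h1.trans (sum_le_of_superharm hS1 hP (s • z))

lemma word_lower (hS1 : (1 : G) ∈ S) (hSsymm : ∀ s ∈ S, s⁻¹ ∈ S) {f : X → ℝ}
    (hf : ∀ x, 0 < f x) (hP : ∀ x, T S f x ≤ f x) (l : List G) (hl : ∀ y ∈ l, y ∈ S) (x : X) :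
    f x ≤ (S.card : ℝ) ^ l.length * f (l.prod • x) := by
  induction l with
  | nil => simp
  | cons a t ih =>
    have ht : ∀ y ∈ t, y ∈ S := fun y hy => hl y (List.mem_cons_of_mem a hy)
    have h1 : f x ≤ (S.card : ℝ) ^ t.length * f (t.prod • x) := ih ht
    have h2 : f (t.prod • x) ≤ S.card * f (a • t.prod • x) :=
      step_lower hS1 hSsymm hf hP (hl a List.mem_cons_self) (t.prod • x)
    have hc : (0:ℝ) < (S.card : ℝ) ^ t.length := pow_pos (card_pos' hS1) _
    calc f x ≤ (S.card : ℝ) ^ t.length * f (t.prod • x) := h1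
      _ ≤ (S.card : ℝ) ^ t.length * (S.card * f (a • t.prod • x)) := by
          exact mul_le_mul_of_nonneg_left h2 hc.le
      _ = (S.card : ℝ) ^ (a :: t).length * f ((a :: t).prod • x) := by
          rw [List.length_cons, List.prod_cons, mul_smul, pow_succ]
          ring

lemma chain_lower {f : X → ℝ} {δ : ℝ} (hδ : δ ≤ 1) (x : X) {N : ℕ}
    (H : ∀ l : List G, (∀ y ∈ l, y ∈ S) → l.length ≤ N → ∀ s ∈ S,
      (1 - δ) * f (l.prod • x) ≤ f (s • l.prod • x))
    {l : List G} (hl : ∀ y ∈ l, y ∈ S) (hlen : l.length ≤ N) :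
    (1 - δ) ^ l.length * f x ≤ f (l.prod • x) := by
  induction l with
  | nil => simp
  | cons a t ih =>
    have ht : ∀ y ∈ t, y ∈ S := fun y hy => hl y (List.mem_cons_of_mem a hy)
    have htlen : t.length ≤ N := by simp at hlen; omega
    have h1 : (1 - δ) ^ t.length * f x ≤ f (t.prod • x) := ih ht htlen
    have h2 : (1 - δ) * f (t.prod • x) ≤ f (a • t.prod • x) :=
      H t ht htlen a (hl a List.mem_cons_self)
    have h0 : (0:ℝ) ≤ 1 - δ := by linarith
    calc (1 - δ) ^ (a :: t).length * f x = (1 - δ) * ((1 - δ) ^ t.length * f x) := by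
          rw [List.length_cons, pow_succ]; ring
      _ ≤ (1 - δ) * f (t.prod • x) := mul_le_mul_of_nonneg_left h1 h0
      _ ≤ f (a • t.prod • x) := h2
      _ = f ((a :: t).prod • x) := by rw [List.prod_cons, mul_smul]

lemma iterate_gap (hS1 : (1 : G) ∈ S) {u w : X → ℝ}
    (hu : ∀ x, T S u x ≤ u x) (hw : ∀ x, w x ≤ u x) {a : ℝ} :
    ∀ (l : List G), (∀ y ∈ l, y ∈ S) → ∀ x : X, w (l.prod • x) ≤ u (l.prod • x) - a →
      (T S)^[l.length] w x ≤ u x - a / (S.card : ℝ) ^ l.length := by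
  intro l
  induction l using List.reverseRecOn with
  | nil => intro _ x hb; simpa using hb
  | append_singleton l s ih =>
    intro hmem x hb
    have hsS : s ∈ S := hmem s (by simp)
    have hlS : ∀ y ∈ l, y ∈ S := fun y hy => hmem y (by simp [hy])
    have hlen : (l ++ [s]).length = l.length + 1 := by simp
    rw [hlen, Function.iterate_succ_apply']
    set v := (T S)^[l.length] w with hv
    have h1 : ∀ s' ∈ S, v (s' • x) ≤ u (s' • x) := fun s' _ => iter_le hS1 hu hw _ _
    have hb' : w (l.prod • (s • x)) ≤ u (l.prod • (s • x)) - a := by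
      have he : (l ++ [s]).prod • x = l.prod • s • x := by
        rw [List.prod_append, List.prod_singleton, mul_smul]
      rwa [he] at hb
    have h2 : v (s • x) ≤ u (s • x) - a / (S.card : ℝ) ^ l.length := ih hlS (s • x) hb'
    have key : ∑ s' ∈ S, v (s' • x) ≤ (∑ s' ∈ S, u (s' • x)) - a / (S.card : ℝ) ^ l.length := by
      have hg : ∀ s' ∈ S, (0:ℝ) ≤ u (s' • x) - v (s' • x) := fun s' hs' => by
        have := h1 s' hs'; linarith
      have hsingle : u (s • x) - v (s • x) ≤ ∑ s' ∈ S, (u (s' • x) - v (s' • x)) :=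
        Finset.single_le_sum hg hsS
      rw [Finset.sum_sub_distrib] at hsingle
      linarith
    have hc : (0:ℝ) < (S.card:ℝ) := card_pos' hS1
    have hmain : T S v x ≤ (T S u x) - a / (S.card:ℝ) ^ (l.length + 1) := by
      show (∑ s' ∈ S, v (s' • x)) / (S.card:ℝ) ≤ _
      rw [pow_succ, ← div_div]
      calc (∑ s' ∈ S, v (s' • x)) / (S.card:ℝ)
          ≤ ((∑ s' ∈ S, u (s' • x)) - a / (S.card:ℝ) ^ l.length) / (S.card:ℝ) :=
            div_le_div_of_nonneg_right key hc.le
        _ = (∑ s' ∈ S, u (s' • x)) / (S.card:ℝ) - a / (S.card:ℝ) ^ l.length / (S.card:ℝ) := by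
            rw [sub_div]
    have := hu x
    linarith

lemma sqrt_am_gm {a b : ℝ} (ha : 0 ≤ a) (hb : 0 < b) :
    Real.sqrt a ≤ (a + b) / (2 * Real.sqrt b) := by
  have hsb : 0 < Real.sqrt b := Real.sqrt_pos.mpr hb
  rw [le_div_iff₀ (by positivity)]
  nlinarith [sq_nonneg (Real.sqrt a - Real.sqrt b), Real.sq_sqrt ha, Real.sq_sqrt hb.le,
    Real.sqrt_nonneg a, Real.sqrt_nonneg b]

lemma sqrt_am_gm_gap {a b δ : ℝ} (ha : 0 ≤ a) (hb : 0 < b) (hδ0 : 0 ≤ δ) (hδ1 : δ ≤ 1)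
    (hbad : a ≤ (1 - δ) * b) :
    Real.sqrt a ≤ (a + b - δ^2 * b / 4) / (2 * Real.sqrt b) := by
  have hsb : 0 < Real.sqrt b := Real.sqrt_pos.mpr hb
  have h3 : Real.sqrt a ≤ (1 - δ/2) * Real.sqrt b := by
    have h4 : Real.sqrt a ≤ Real.sqrt ((1-δ)*b) := Real.sqrt_le_sqrt hbad
    have h5 : Real.sqrt ((1-δ)*b) = Real.sqrt (1-δ) * Real.sqrt b :=
      Real.sqrt_mul (by linarith) b
    have h6 : Real.sqrt (1-δ) ≤ 1 - δ/2 := by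
      have h7 : (1:ℝ) - δ ≤ (1 - δ/2)^2 := by nlinarith
      calc Real.sqrt (1-δ) ≤ Real.sqrt ((1-δ/2)^2) := Real.sqrt_le_sqrt h7
        _ = 1 - δ/2 := Real.sqrt_sq (by linarith)
    calc Real.sqrt a ≤ Real.sqrt (1-δ) * Real.sqrt b := by rw [← h5]; exact h4
      _ ≤ (1 - δ/2) * Real.sqrt b := mul_le_mul_of_nonneg_right h6 hsb.le
  rw [le_div_iff₀ (by positivity)]
  have h7 : 0 ≤ Real.sqrt b - Real.sqrt a - δ/2 * Real.sqrt b := by nlinarith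
  have h8 : 0 ≤ Real.sqrt b - Real.sqrt a + δ/2 * Real.sqrt b := by
    have := Real.sqrt_nonneg a
    nlinarith
  nlinarith [mul_nonneg h7 h8, Real.sq_sqrt ha, Real.sq_sqrt hb.le]

lemma sqrt_superharm (hS1 : (1:G) ∈ S) {f : X → ℝ} (hf : ∀ x, 0 < f x)
    (hP : ∀ x, T S f x ≤ f x) (x : X) :
    T S (fun z => Real.sqrt (f z)) x ≤ Real.sqrt (f x) := by
  have hb : 0 < f x := hf x
  have hsb : 0 < Real.sqrt (f x) := Real.sqrt_pos.mpr hb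
  have hc : (0:ℝ) < S.card := card_pos' hS1
  have h1 : ∑ s ∈ S, Real.sqrt (f (s • x))
      ≤ ∑ s ∈ S, (f (s • x) + f x) / (2 * Real.sqrt (f x)) :=
    Finset.sum_le_sum fun s _ => sqrt_am_gm (hf _).le hb
  have h2 : ∑ s ∈ S, (f (s • x) + f x) / (2 * Real.sqrt (f x))
      = ((∑ s ∈ S, f (s • x)) + S.card * f x) / (2 * Real.sqrt (f x)) := by
    rw [← Finset.sum_div, Finset.sum_add_distrib, Finset.sum_const, nsmul_eq_mul]
  have h3 : (∑ s ∈ S, f (s • x)) ≤ S.card * f x := sum_le_of_superharm hS1 hP x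
  have h4 : ((∑ s ∈ S, f (s • x)) + S.card * f x) / (2 * Real.sqrt (f x))
      ≤ (S.card : ℝ) * Real.sqrt (f x) := by
    rw [div_le_iff₀ (by positivity)]
    nlinarith [Real.sq_sqrt hb.le]
  show (∑ s ∈ S, Real.sqrt (f (s • x))) / (S.card : ℝ) ≤ Real.sqrt (f x)
  rw [div_le_iff₀ hc]
  calc ∑ s ∈ S, Real.sqrt (f (s • x)) ≤ (S.card : ℝ) * Real.sqrt (f x) :=
        h1.trans (h2.le.trans h4)
    _ = Real.sqrt (f x) * (S.card : ℝ) := mul_comm _ _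

lemma sqrt_superharm_gap (hS1 : (1:G) ∈ S) {f : X → ℝ} (hf : ∀ x, 0 < f x)
    (hP : ∀ x, T S f x ≤ f x) {δ : ℝ} (hδ0 : 0 ≤ δ) (hδ1 : δ ≤ 1)
    {y : X} {s₀ : G} (hs₀ : s₀ ∈ S) (hbad : f (s₀ • y) ≤ (1 - δ) * f y) :
    T S (fun z => Real.sqrt (f z)) y
      ≤ (1 - δ^2/(8 * S.card)) * Real.sqrt (f y) := by
  have hb : 0 < f y := hf y
  have hsb : 0 < Real.sqrt (f y) := Real.sqrt_pos.mpr hb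
  have hc : (0:ℝ) < S.card := card_pos' hS1
  set sb := Real.sqrt (f y) with hsbdef
  set c := (S.card : ℝ) with hcdef
  have hall : ∀ s ∈ S, Real.sqrt (f (s • y)) ≤ (f (s • y) + f y) / (2 * sb) :=
    fun s _ => sqrt_am_gm (hf _).le hb
  have himp : Real.sqrt (f (s₀ • y)) ≤ (f (s₀ • y) + f y - δ^2 * f y / 4) / (2 * sb) :=
    sqrt_am_gm_gap (hf _).le hb hδ0 hδ1 hbad
  -- gap at s₀
  have hgap : (f (s₀ • y) + f y) / (2 * sb) - Real.sqrt (f (s₀ • y))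
      ≥ δ^2/8 * (f y / sb) := by
    have he : (f (s₀ • y) + f y) / (2 * sb) - (f (s₀ • y) + f y - δ^2 * f y / 4) / (2 * sb)
        = δ^2/8 * (f y / sb) := by ring
    linarith [himp, he.symm.le]
  -- sum bound via nonnegative differences
  have hg : ∀ s ∈ S, (0:ℝ) ≤ (f (s • y) + f y) / (2 * sb) - Real.sqrt (f (s • y)) :=
    fun s hs => by linarith [hall s hs]
  have hsingle : (f (s₀ • y) + f y) / (2 * sb) - Real.sqrt (f (s₀ • y))
      ≤ ∑ s ∈ S, ((f (s • y) + f y) / (2 * sb) - Real.sqrt (f (s • y))) :=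
    Finset.single_le_sum hg hs₀
  rw [Finset.sum_sub_distrib] at hsingle
  have h2 : ∑ s ∈ S, (f (s • y) + f y) / (2 * sb)
      = ((∑ s ∈ S, f (s • y)) + c * f y) / (2 * sb) := by
    rw [← Finset.sum_div, Finset.sum_add_distrib, Finset.sum_const, nsmul_eq_mul]
  have h3 : (∑ s ∈ S, f (s • y)) ≤ c * f y := sum_le_of_superharm hS1 hP y
  have h4 : ((∑ s ∈ S, f (s • y)) + c * f y) / (2 * sb) ≤ c * sb := by
    rw [div_le_iff₀ (by positivity)]
    nlinarith [Real.sq_sqrt hb.le]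
  have hdivsqrt : f y / sb = sb := Real.div_sqrt
  have hsum : ∑ s ∈ S, Real.sqrt (f (s • y)) ≤ c * sb - δ^2/8 * sb := by
    have := hsingle
    rw [h2] at this
    have h5 : ∑ s ∈ S, Real.sqrt (f (s • y))
        ≤ ((∑ s ∈ S, f (s • y)) + c * f y) / (2 * sb) - δ^2/8 * (f y / sb) := by
      linarith [hgap]
    rw [hdivsqrt] at h5
    linarith [h4]
  show (∑ s ∈ S, Real.sqrt (f (s • y))) / c ≤ _
  rw [div_le_iff₀ hc]
  have heq : (1 - δ^2/(8 * c)) * sb * c = c * sb - δ^2/8 * sb := by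
    field_simp
  linarith [hsum, heq.ge]

end NorthshieldAux

namespace NorthshieldAux

set_option maxHeartbeats 1000000 in
lemma hard_direction {G X : Type*} [Group G] [MulAction G X]
    (S : Finset G) (hS1 : (1 : G) ∈ S) (hSsymm : ∀ s ∈ S, s⁻¹ ∈ S)
    (hSgen : Subgroup.closure (S : Set G) = ⊤)
    {f : X → ℝ} (hf : ∀ x, 0 < f x)
    (hsup : ∀ x, (∑ s ∈ S, f (s • x)) / S.card ≤ f x)
    (hno : ¬ ∃ E : ℕ → X, ∀ g : G,
      Filter.Tendsto (fun n => f (g • E n) / f (E n)) Filter.atTop (nhds 1)) :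
    sInf {l : ℝ | 0 < l ∧ ∃ f : X → ℝ, (∀ x, 0 < f x) ∧
        ∀ x, (∑ s ∈ S, f (s • x)) / S.card ≤ l * f x} ≠ 1 := by
  classical
  have hc : (0:ℝ) < S.card := card_pos' hS1
  have hc1 : (1:ℝ) ≤ S.card := one_le_card hS1
  have hsup' : ∀ x, T S f x ≤ f x := hsup
  -- Step 1: a uniform scale at which the ratio condition fails
  have hQ : ¬ ∀ k : ℕ, ∃ x : X, ∀ l : List G, (∀ y ∈ l, y ∈ S) → l.length ≤ k + 1 →
      |f (l.prod • x) / f x - 1| < 1 / ((k:ℝ) + 1) := by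
    intro hQ'
    apply hno
    choose E hE using hQ'
    refine ⟨E, fun g => ?_⟩
    obtain ⟨lg, hlg, hlgp⟩ := exists_word hSsymm hSgen g
    rw [Metric.tendsto_atTop]
    intro ε hε
    obtain ⟨m, hm⟩ := exists_nat_one_div_lt hε
    refine ⟨max lg.length m, fun n hn => ?_⟩
    have h1 : lg.length ≤ n + 1 := le_trans (le_trans (le_max_left _ _) hn) (Nat.le_succ n)
    have h2 := hE n lg hlg h1
    rw [hlgp] at h2
    rw [Real.dist_eq]
    have h3 : 1 / ((n:ℝ) + 1) ≤ 1 / ((m:ℝ) + 1) := by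
      apply one_div_le_one_div_of_le (by positivity)
      have hmn : m ≤ n := le_trans (le_max_right _ _) hn
      have : (m:ℝ) ≤ (n:ℝ) := by exact_mod_cast hmn
      linarith
    linarith [h2]
  push_neg at hQ
  obtain ⟨k, hk⟩ := hQ
  set N : ℕ := k + 1 with hN
  have hNR : ((N:ℕ):ℝ) = (k:ℝ) + 1 := by rw [hN]; push_cast; ring
  have hNpos : (0:ℝ) < N := by rw [hNR]; positivity
  set ε : ℝ := 1 / ((k:ℝ) + 1) with hε
  clear_value ε
  have hε0 : 0 < ε := by rw [hε]; positivity
  have hε1 : ε ≤ 1 := by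
    rw [hε, div_le_one (by positivity)]
    have : (0:ℝ) ≤ (k:ℝ) := Nat.cast_nonneg k
    linarith
  have h2ε : (0:ℝ) < 2 + ε := by linarith
  set ε' : ℝ := ε / (2 + ε) with hε'
  clear_value ε'
  have hε'0 : 0 < ε' := by rw [hε']; positivity
  have hε'lt : ε' < ε := by rw [hε']; exact div_lt_self hε0 (by linarith)
  set δ : ℝ := ε' / N with hδ
  clear_value δ
  have hδ0 : 0 < δ := by rw [hδ]; positivity
  have hδ1 : δ ≤ 1 := by
    have h4 : δ ≤ ε' := by
      rw [hδ]
      apply div_le_self hε'0.le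
      rw [hNR]; have : (0:ℝ) ≤ (k:ℝ) := Nat.cast_nonneg k; linarith
    linarith
  have hNδ : (N:ℝ) * δ = ε' := by
    rw [hδ]; field_simp
  have hbern : 1 - ε' ≤ (1-δ)^N := by
    have hb := one_add_mul_le_pow (a := -δ) (by linarith) N
    calc 1 - ε' = 1 + (N:ℝ) * (-δ) := by rw [mul_neg, hNδ]; ring
      _ ≤ (1 + -δ)^N := hb
      _ = (1-δ)^N := by ring_nf
  -- Step 2: a definite decay step within distance 2N of every point
  have hbadstep : ∀ x : X, ∃ (l : List G) (s : G), (∀ y ∈ l, y ∈ S) ∧ l.length ≤ 2*N ∧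
      s ∈ S ∧ f (s • l.prod • x) < (1 - δ) * f (l.prod • x) := by
    intro x
    by_contra hgood
    push_neg at hgood
    obtain ⟨l, hlS, hlen, hbadineq⟩ := hk x
    have hlenN : l.length ≤ N := hlen
    have H2N : ∀ l' : List G, (∀ y ∈ l', y ∈ S) → l'.length ≤ 2*N → ∀ s ∈ S,
        (1-δ) * f (l'.prod • x) ≤ f (s • l'.prod • x) :=
      fun l' h1 h2 s hs => hgood l' s h1 h2 hs
    have hpowN : 1 - ε' ≤ (1-δ)^l.length :=
      hbern.trans (pow_le_pow_of_le_one (by linarith) (by linarith) hlenN)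
    have hlow : (1 - ε') * f x ≤ f (l.prod • x) := by
      have hch := chain_lower (S := S) (f := f) (δ := δ) hδ1 x H2N hlS
        (le_trans hlenN (by omega))
      nlinarith [hf x]
    obtain ⟨li, hliS, hlilen, hliprod⟩ := inv_word hSsymm hlS
    have hup : (1 - ε') * f (l.prod • x) ≤ f x := by
      have H' : ∀ l' : List G, (∀ y ∈ l', y ∈ S) → l'.length ≤ N → ∀ s ∈ S,
          (1-δ) * f (l'.prod • (l.prod • x)) ≤ f (s • l'.prod • (l.prod • x)) := by
        intro l' h1 h2 s hs
        have he : l'.prod • (l.prod • x) = (l' ++ l).prod • x := by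
          rw [List.prod_append, mul_smul]
        rw [he]
        refine hgood (l' ++ l) s ?_ ?_ hs
        · intro y hy
          rcases List.mem_append.mp hy with h | h
          exacts [h1 y h, hlS y h]
        · rw [List.length_append]; omega
      have hch := chain_lower (S := S) (f := f) (δ := δ) hδ1 (l.prod • x) H' hliS
        (by rw [hlilen]; exact hlenN)
      have hpt : f (li.prod • l.prod • x) = f x := by rw [hliprod, inv_smul_smul]
      have hpow' : 1 - ε' ≤ (1-δ)^li.length := by rw [hlilen]; exact hpowN
      rw [hpt] at hch
      nlinarith [hf (l.prod • x)]
    have hfx := hf x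
    have hfy := hf (l.prod • x)
    have hkey : (1 - ε') * (1 + ε/2) = 1 := by
      rw [hε']; field_simp; try ring
    have hub2 : f (l.prod • x) ≤ (1 + ε/2) * f x := by
      nlinarith [mul_le_mul_of_nonneg_left hup (show (0:ℝ) ≤ 1 + ε/2 by linarith)]
    have hr1 : 1 - ε' ≤ f (l.prod • x) / f x := by rw [le_div_iff₀ hfx]; exact hlow
    have hr2 : f (l.prod • x) / f x ≤ 1 + ε/2 := by rw [div_le_iff₀ hfx]; exact hub2
    have habs : |f (l.prod • x) / f x - 1| < ε := by
      rw [abs_lt]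
      constructor
      · linarith
      · linarith
    exact absurd hbadineq (not_le.mpr habs)
  -- Step 3: the square root of f is superharmonic with a definite gap nearby
  set u : X → ℝ := fun z => Real.sqrt (f z) with hu
  have hupos : ∀ z, 0 < u z := fun z => Real.sqrt_pos.mpr (hf z)
  have hTu : ∀ z, T S u z ≤ u z := fun z => sqrt_superharm hS1 hf hsup' z
  set c : ℝ := (S.card : ℝ) with hcdef
  set η : ℝ := δ^2 / (8*c) with hη
  clear_value η
  have hη0 : 0 < η := by rw [hη]; positivity
  have hη1 : η ≤ 1/8 := by
    rw [hη]
    have hδ2 : δ^2 ≤ 1 := by nlinarith [hδ0, hδ1, sq_nonneg δ]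
    exact div_le_div₀ zero_le_one hδ2 (by norm_num) (by linarith)
  set K : ℕ := 2*N with hK
  have hcK1 : (1:ℝ) ≤ c^K := one_le_pow₀ hc1
  have hcK0 : (0:ℝ) < c^K := by positivity
  set lam : ℝ := 1 - η/(c^K * c^K) with hlam
  clear_value lam
  have hlam1 : lam < 1 := by
    have : 0 < η/(c^K * c^K) := by positivity
    rw [hlam]; linarith
  have hlam0 : 0 < lam := by
    have h5 : η/(c^K * c^K) ≤ η := div_le_self hη0.le (by nlinarith)
    rw [hlam]; linarith
  -- Step 4: the iterate of the Markov operator contracts u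
  have hiter : ∀ x : X, (T S)^[K+1] u x ≤ lam * u x := by
    intro x
    obtain ⟨l, s, hlS, hlen, hsS, hbad⟩ := hbadstep x
    obtain ⟨l2, hl2S, hl2len, hl2prod⟩ := pad_word hS1 hlS hlen
    have hgapT : T S u (l.prod • x) ≤ (1 - δ^2/(8*(S.card:ℝ))) * u (l.prod • x) :=
      sqrt_superharm_gap hS1 hf hsup' hδ0.le hδ1 hsS hbad.le
    have hgapT' : T S u (l.prod • x) ≤ u (l.prod • x) - η * u (l.prod • x) := by
      have he : (1 - δ^2/(8*(S.card:ℝ))) * u (l.prod • x)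
          = u (l.prod • x) - η * u (l.prod • x) := by
        rw [hη, hcdef]; ring
      linarith [he ▸ hgapT]
    have hbadpt : (T S u) (l2.prod • x) ≤ u (l2.prod • x) - η * u (l.prod • x) := by
      rw [hl2prod]; linarith
    have higap := iterate_gap hS1 hTu hTu l2 hl2S x hbadpt
    rw [hl2len] at higap
    have hword : f x ≤ c^K * f (l.prod • x) := by
      have hw := word_lower hS1 hSsymm hf hsup' l2 hl2S x
      rw [hl2len, hl2prod] at hw
      exact hw
    have huy : u x ≤ c^K * u (l.prod • x) := by
      have h1 : u x ≤ Real.sqrt (c^K * f (l.prod • x)) := Real.sqrt_le_sqrt hword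
      rw [Real.sqrt_mul hcK0.le] at h1
      have h2 : Real.sqrt (c^K) ≤ c^K := by
        calc Real.sqrt (c^K) ≤ Real.sqrt ((c^K)^2) := Real.sqrt_le_sqrt (by nlinarith)
          _ = c^K := Real.sqrt_sq hcK0.le
      calc u x ≤ Real.sqrt (c^K) * u (l.prod • x) := h1
        _ ≤ c^K * u (l.prod • x) := mul_le_mul_of_nonneg_right h2 (hupos _).le
    have hfinal : u x - η * u (l.prod • x) / c^K ≤ lam * u x := by
      have h3 : η * u x / (c^K * c^K) ≤ η * u (l.prod • x) / c^K := by
        rw [div_le_div_iff₀ (by positivity) hcK0]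
        have h5 := mul_le_mul_of_nonneg_left huy (mul_nonneg hη0.le hcK0.le)
        nlinarith [h5]
      have h4 : lam * u x = u x - η * u x/(c^K * c^K) := by rw [hlam]; ring
      rw [h4]; linarith
    rw [Function.iterate_succ_apply]
    exact le_trans higap hfinal
  -- Step 5: build a positive μ-superharmonic function with μ < 1
  set μ : ℝ := 1 - (1 - lam)/((K:ℝ)+1) with hμ
  clear_value μ
  have hK1 : (1:ℝ) ≤ (K:ℝ)+1 := by
    have : (0:ℝ) ≤ (K:ℝ) := Nat.cast_nonneg K
    linarith
  have hμ0 : 0 < μ := by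
    have h1 : (1-lam)/((K:ℝ)+1) ≤ 1 - lam := div_le_self (by linarith) hK1
    rw [hμ]; linarith
  have hμ1 : μ < 1 := by
    have : 0 < (1-lam)/((K:ℝ)+1) := div_pos (by linarith) (by linarith)
    rw [hμ]; linarith
  have hμpow : lam ≤ μ^(K+1) := by
    have hb := one_add_mul_le_pow (a := -((1-lam)/((K:ℝ)+1))) (by
      have h1 : (1-lam)/((K:ℝ)+1) ≤ 1 - lam := div_le_self (by linarith) hK1
      linarith) (K+1)
    have hKne : ((K:ℝ)+1) ≠ 0 := by positivity
    have he : 1 + ((K+1:ℕ):ℝ) * (-((1-lam)/((K:ℝ)+1))) = lam := by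
      push_cast
      field_simp
      try ring
    calc lam = 1 + ((K+1:ℕ):ℝ) * (-((1-lam)/((K:ℝ)+1))) := he.symm
      _ ≤ (1 + -((1-lam)/((K:ℝ)+1)))^(K+1) := hb
      _ = μ^(K+1) := by rw [hμ]; ring_nf
  set v : X → ℝ := fun x => ∑ j ∈ Finset.range (K+1), (μ⁻¹)^j * (T S)^[j] u x with hv
  have hvpos : ∀ x, 0 < v x := by
    intro x
    rw [hv]
    exact Finset.sum_pos
      (fun j _ => mul_pos (pow_pos (inv_pos.mpr hμ0) j) (iter_pos hS1 hupos j x))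
      (Finset.nonempty_range_iff.mpr (Nat.succ_ne_zero K))
  have hTv : ∀ x, T S v x ≤ μ * v x := by
    intro x
    have hexp : T S v x = ∑ j ∈ Finset.range (K+1), (μ⁻¹)^j * (T S)^[j+1] u x := by
      show (∑ s ∈ S, v (s • x)) / (S.card:ℝ) = _
      simp only [hv]
      rw [Finset.sum_comm, Finset.sum_div]
      refine Finset.sum_congr rfl fun j _ => ?_
      rw [← Finset.mul_sum, mul_div_assoc]
      congr 1
      rw [Function.iterate_succ_apply']
      rfl
    have hrhs : μ * v x = (∑ j ∈ Finset.range K, (μ⁻¹)^j * (T S)^[j+1] u x) + μ * u x := by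
      simp only [hv]
      rw [Finset.sum_range_succ']
      simp only [pow_zero, one_mul, Function.iterate_zero, id_eq]
      rw [mul_add, Finset.mul_sum]
      congr 1
      refine Finset.sum_congr rfl fun j _ => ?_
      rw [pow_succ]
      field_simp
      try ring
    rw [hexp, Finset.sum_range_succ, hrhs]
    have hlast : (μ⁻¹)^K * (T S)^[K+1] u x ≤ μ * u x := by
      have h1 : (T S)^[K+1] u x ≤ μ^(K+1) * u x :=
        (hiter x).trans (mul_le_mul_of_nonneg_right hμpow (hupos x).le)
      have h2 : (μ⁻¹)^K * (T S)^[K+1] u x ≤ (μ⁻¹)^K * (μ^(K+1) * u x) :=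
        mul_le_mul_of_nonneg_left h1 (by positivity)
      have h3 : (μ⁻¹)^K * (μ^(K+1) * u x) = μ * u x := by
        rw [pow_succ, inv_pow, ← mul_assoc, ← mul_assoc,
          inv_mul_cancel₀ (pow_ne_zero K hμ0.ne'), one_mul]
      linarith
    exact add_le_add_right hlast _
  have hmem : μ ∈ {l : ℝ | 0 < l ∧ ∃ f : X → ℝ, (∀ x, 0 < f x) ∧
      ∀ x, (∑ s ∈ S, f (s • x)) / S.card ≤ l * f x} := ⟨hμ0, v, hvpos, fun x => hTv x⟩
  have hle := csInf_le ⟨0, fun l hl => hl.1.le⟩ hmem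
  intro h1
  rw [h1] at hle
  linarith

end NorthshieldAux

open NorthshieldAux in
/-- **Northshield's amenability criterion extended to transitive group actions (strong form).** -/
theorem northshield_strong {G X : Type*} [Group G] [MulAction G X] [Nonempty X]
    (S : Finset G) (hS1 : (1 : G) ∈ S) (hSsymm : ∀ s ∈ S, s⁻¹ ∈ S)
    (hSgen : Subgroup.closure (S : Set G) = ⊤)
    (htrans : ∀ x y : X, ∃ g : G, g • x = y) :
    sInf {l : ℝ | 0 < l ∧ ∃ f : X → ℝ, (∀ x, 0 < f x) ∧
        ∀ x, (∑ s ∈ S, f (s • x)) / S.card ≤ l * f x} = 1 ↔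
      ∀ f : X → ℝ, (∀ x, 0 < f x) →
        (∀ x, (∑ s ∈ S, f (s • x)) / S.card ≤ f x) →
        ∃ E : ℕ → X, ∀ g : G,
          Tendsto (fun n => f (g • E n) / f (E n)) atTop (nhds 1) := by
  have hc : (0:ℝ) < S.card := card_pos' hS1
  constructor
  · -- hard direction
    intro hinf f hf hsup
    by_contra hno
    exact absurd hinf (hard_direction S hS1 hSsymm hSgen hf hsup hno)
  · -- easy direction
    intro hyp
    refine le_antisymm (csInf_le ⟨0, fun l hl => hl.1.le⟩ ?_) (le_csInf ?_ ?_)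
    · -- 1 belongs to the set
      refine ⟨one_pos, fun _ => (1:ℝ), fun _ => one_pos, fun x => ?_⟩
      rw [Finset.sum_const, nsmul_eq_mul, mul_one, div_self hc.ne', one_mul]
    · exact ⟨1, one_pos, fun _ => (1:ℝ), fun _ => one_pos, fun x => by
        rw [Finset.sum_const, nsmul_eq_mul, mul_one, div_self hc.ne', one_mul]⟩
    · rintro l ⟨hl0, f, hf, hPl⟩
      by_contra hl1
      push_neg at hl1
      have hsup : ∀ x, (∑ s ∈ S, f (s • x)) / S.card ≤ f x := fun x =>
        (hPl x).trans (by nlinarith [hf x])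
      obtain ⟨E, hE⟩ := hyp f hf hsup
      have hsumt : Tendsto (fun n => ∑ s ∈ S, f (s • E n) / f (E n)) atTop
          (nhds (S.card : ℝ)) := by
        have h1 : Tendsto (fun n => ∑ s ∈ S, f (s • E n) / f (E n)) atTop
            (nhds (∑ _s ∈ S, (1:ℝ))) :=
          tendsto_finset_sum _ fun s _ => hE s
        rwa [Finset.sum_const, nsmul_eq_mul, mul_one] at h1
      have hb : ∀ n, ∑ s ∈ S, f (s • E n) / f (E n) ≤ l * S.card := by
        intro n
        have h2 : (∑ s ∈ S, f (s • E n)) ≤ l * f (E n) * S.card := by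
          have := hPl (E n)
          rwa [div_le_iff₀ hc] at this
        rw [← Finset.sum_div, div_le_iff₀ (hf (E n))]
        calc (∑ s ∈ S, f (s • E n)) ≤ l * f (E n) * S.card := h2
          _ = l * S.card * f (E n) := by ring
      have hle : (S.card : ℝ) ≤ l * S.card := le_of_tendsto hsumt (Eventually.of_forall hb)
      nlinarith
end

section
/- Let G be a group generated by a finite symmetric subset S (i.e. S = S⁻¹) containing the identity, acting transitively on a nonempty set X, and let P be the averaging (Markov) operator Pf(x) = (1/|S|)·Σ_{s∈S} f(s•x). Then inf{λ > 0 : there exists f : X → ℝ with f(x) > 0 for all x and Pf(x) ≤ λ·f(x) for all x} = 1 if and only if for every f : X → ℝ with f > 0 pointwise and Pf ≤ f pointwise there exists a sequence (E_n) in X such that Pf(E_n)/f(E_n) → 1 as n → ∞. -/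
open Filter

/-- **Northshield's amenability criterion extended to transitive group actions (weak form).**
Same setting as the strong form, but the approximating sequence is only required to satisfy
`Pf(Eₙ)/f(Eₙ) → 1`. -/
theorem northshield_weak {G X : Type*} [Group G] [MulAction G X] [Nonempty X]
    (S : Finset G) (hS1 : (1 : G) ∈ S) (hSsymm : ∀ s ∈ S, s⁻¹ ∈ S)
    (hSgen : Subgroup.closure (S : Set G) = ⊤)
    (htrans : ∀ x y : X, ∃ g : G, g • x = y) :
    sInf {l : ℝ | 0 < l ∧ ∃ f : X → ℝ, (∀ x, 0 < f x) ∧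
        ∀ x, (∑ s ∈ S, f (s • x)) / S.card ≤ l * f x} = 1 ↔
      ∀ f : X → ℝ, (∀ x, 0 < f x) →
        (∀ x, (∑ s ∈ S, f (s • x)) / S.card ≤ f x) →
        ∃ E : ℕ → X,
          Tendsto (fun n => ((∑ s ∈ S, f (s • E n)) / S.card) / f (E n)) atTop (nhds 1) := by
  set A : Set ℝ := {l : ℝ | 0 < l ∧ ∃ f : X → ℝ, (∀ x, 0 < f x) ∧
      ∀ x, (∑ s ∈ S, f (s • x)) / S.card ≤ l * f x} with hA
  have hbdd : BddBelow A := ⟨0, fun l hl => hl.1.le⟩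
  have h1A : (1 : ℝ) ∈ A := by
    refine ⟨one_pos, fun _ => 1, fun _ => one_pos, fun x => ?_⟩
    have hc : (0:ℝ) < (S.card : ℝ) := by
      exact_mod_cast Finset.card_pos.mpr ⟨1, hS1⟩
    simp [Finset.sum_const, div_self hc.ne']
  constructor
  · intro hinf f hf hsup
    have hratio_le : ∀ x, (∑ s ∈ S, f (s • x)) / S.card / f x ≤ 1 := fun x =>
      (div_le_one (hf x)).mpr (hsup x)
    have hex : ∀ n : ℕ, ∃ x : X,
        1 - 1 / (n + 2 : ℝ) < (∑ s ∈ S, f (s • x)) / S.card / f x := by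
      intro n
      by_contra hcon
      push_neg at hcon
      have hn2 : (0:ℝ) < (n + 2 : ℝ) := by positivity
      have hcpos : (0:ℝ) < 1 - 1 / (n + 2 : ℝ) := by
        rw [sub_pos, div_lt_one hn2]; linarith
      have hmem : (1 - 1 / (n + 2 : ℝ)) ∈ A := by
        refine ⟨hcpos, f, hf, fun x => ?_⟩
        exact (div_le_iff₀ (hf x)).mp (hcon x)
      have := csInf_le hbdd hmem
      rw [hinf] at this
      have : 1 / (n + 2 : ℝ) ≤ 0 := by linarith
      have : (0:ℝ) < 1 / (n + 2 : ℝ) := by positivity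
      linarith
    choose E hE using hex
    refine ⟨E, ?_⟩
    have hlow : Tendsto (fun n : ℕ => 1 - 1 / (n + 2 : ℝ)) atTop (nhds 1) := by
      have h0 : Tendsto (fun n : ℕ => 1 / ((n : ℝ) + 2)) atTop (nhds 0) := by
        have := (tendsto_one_div_add_atTop_nhds_zero_nat : Tendsto (fun n : ℕ => 1 / ((n : ℝ) + 1)) atTop (nhds 0)).comp (tendsto_add_atTop_nat 1)
        simpa [Function.comp_def, Nat.cast_add, Nat.cast_one, add_assoc, one_add_one_eq_two] using this
      have := (tendsto_const_nhds (x := (1:ℝ)) (f := atTop (α := ℕ))).sub h0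
      simpa using this
    exact tendsto_of_tendsto_of_tendsto_of_le_of_le hlow tendsto_const_nhds
      (fun n => (hE n).le) (fun n => hratio_le (E n))
  · intro h
    refine le_antisymm (csInf_le hbdd h1A) (le_csInf ⟨1, h1A⟩ ?_)
    rintro l ⟨hl, f, hf, hPf⟩
    by_contra hlt
    push_neg at hlt
    have hsup : ∀ x, (∑ s ∈ S, f (s • x)) / S.card ≤ f x := fun x =>
      (hPf x).trans (by nlinarith [hf x, hlt.le])
    obtain ⟨E, hE⟩ := h f hf hsup
    have : (1:ℝ) ≤ l :=
      le_of_tendsto' hE fun n => (div_le_iff₀ (hf _)).mpr (hPf _)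
    linarith
end

section
/- Let G be a group acting on a set X, let S be a finite subset of G with S = S⁻¹, let f : X → ℝ be positive everywhere, and let β : ℕ → ℝ be positive, non-increasing, with β(n) → 0. Then the following are equivalent: (1) there exists a sequence (E_n) in X such that for every g in the subgroup generated by S, f(g•E_n)/f(E_n) → 1; (2) there exists a sequence (E_n) in X such that for every n and every g that is a product of at most n elements of S (i.e. g = l.prod for some list l of elements of S with length ≤ n), |f(g•E_n)/f(E_n) − 1| < β(n). -/
open Filter Pointwise

lemma list_prod_mem_pow' {G : Type*} [Group G] [DecidableEq G] (s : Finset G) :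
    ∀ (l : List G), (∀ g ∈ l, g ∈ s) → l.prod ∈ s ^ l.length := by
  intro l
  induction l with
  | nil => simp [Finset.mem_one]
  | cons a l ih =>
    intro h
    rw [List.prod_cons, List.length_cons, pow_succ']
    exact Finset.mul_mem_mul (h a (by simp)) (ih fun g hg => h g (by simp [hg]))

lemma mem_pow_closure' {G : Type*} [Group G] [DecidableEq G] (s : Finset G) :
    ∀ n, ∀ g ∈ (insert 1 s : Finset G) ^ n, g ∈ Subgroup.closure (s : Set G) := by
  intro n
  induction n with
  | zero =>
    intro g hg
    simp only [pow_zero, Finset.mem_one] at hg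
    exact hg ▸ one_mem _
  | succ n ih =>
    intro g hg
    rw [pow_succ] at hg
    obtain ⟨a, ha, b, hb, rfl⟩ := Finset.mem_mul.1 hg
    refine mul_mem (ih a ha) ?_
    rcases Finset.mem_insert.1 hb with rfl | hb
    · exact one_mem _
    · exact Subgroup.subset_closure hb

/-- Reformulation of the strong approximation property in terms of words of bounded length:
`f(g•Eₙ)/f(Eₙ) → 1` for all `g` in the subgroup generated by a finite symmetric set `S`
iff there is a sequence `(Eₙ)` such that every word `g` of length `≤ n` in `S` satisfies
`|f(g•Eₙ)/f(Eₙ) − 1| < β(n)`, for any fixed positive non-increasing `β → 0`. -/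
theorem strong_approx_iff_word_approx {G X : Type*} [Group G] [MulAction G X]
    (S : Finset G) (hSsymm : ∀ s ∈ S, s⁻¹ ∈ S)
    (f : X → ℝ) (hf : ∀ x, 0 < f x)
    (β : ℕ → ℝ) (hβpos : ∀ n, 0 < β n) (hβmono : ∀ m n, m ≤ n → β n ≤ β m)
    (hβlim : Tendsto β atTop (nhds 0)) :
    (∃ E : ℕ → X, ∀ g ∈ Subgroup.closure (S : Set G),
        Tendsto (fun n => f (g • E n) / f (E n)) atTop (nhds 1)) ↔
      (∃ E : ℕ → X, ∀ n : ℕ, ∀ l : List G, (∀ g ∈ l, g ∈ S) → l.length ≤ n →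
        |f (l.prod • E n) / f (E n) - 1| < β n) := by
  classical
  constructor
  · rintro ⟨E, hE⟩
    have key : ∀ n : ℕ, ∃ m : ℕ, ∀ l : List G, (∀ g ∈ l, g ∈ S) → l.length ≤ n →
        |f (l.prod • E m) / f (E m) - 1| < β n := by
      intro n
      have h1 : ∀ g ∈ (insert 1 S : Finset G) ^ n,
          ∀ᶠ m in atTop, |f (g • E m) / f (E m) - 1| < β n := by
        intro g hg
        have ht := hE g (mem_pow_closure' S n g hg)
        have := ht (Metric.ball_mem_nhds 1 (hβpos n))
        simpa [Metric.mem_ball, Real.dist_eq] using this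
      have h2 : ∀ᶠ m in atTop, ∀ g ∈ (insert 1 S : Finset G) ^ n,
          |f (g • E m) / f (E m) - 1| < β n :=
        (Filter.eventually_all_finset _).2 h1
      obtain ⟨m, hm⟩ := h2.exists
      refine ⟨m, fun l hl hlen => ?_⟩
      have hmem : l.prod ∈ (insert 1 S : Finset G) ^ n := by
        have h3 := list_prod_mem_pow' (insert 1 S) (l ++ List.replicate (n - l.length) 1)
          (by
            intro g hg
            rcases List.mem_append.1 hg with h | h
            · exact Finset.mem_insert_of_mem (hl g h)
            · simp [List.eq_of_mem_replicate h])
        simpa [List.prod_append, List.length_append, Nat.add_sub_cancel' hlen] using h3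
      exact hm _ hmem
    choose m hm using key
    exact ⟨fun n => E (m n), fun n l hl hlen => hm n l hl hlen⟩
  · rintro ⟨E, hE⟩
    refine ⟨E, fun g hg => ?_⟩
    have hg' : g ∈ Submonoid.closure ((S : Set G) ∪ (S : Set G)⁻¹) := by
      rw [← Subgroup.closure_toSubmonoid]; exact hg
    obtain ⟨l, hl, rfl⟩ := Submonoid.exists_list_of_mem_closure hg'
    have hlS : ∀ g ∈ l, g ∈ S := by
      intro g hgl
      rcases hl g hgl with h | h
      · exact h
      · simpa using hSsymm _ (Set.mem_inv.1 h)
    rw [tendsto_iff_dist_tendsto_zero]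
    refine squeeze_zero' (Eventually.of_forall fun n => dist_nonneg) ?_ hβlim
    filter_upwards [eventually_ge_atTop l.length] with n hn
    rw [Real.dist_eq]
    exact (hE n l hlS hn).le
end

section
/- Let G be a connected, locally finite simple graph on a vertex set V with all vertex degrees at most d. Let h : V → ℝ be positive, bounded above, and harmonic, i.e. for every vertex v, deg(v)·h(v) = Σ_{w adjacent to v} h(w). Then for every ε > 0 and every k ∈ ℕ there exists a vertex x such that every vertex y with graph distance dist(x,y) ≤ k satisfies |h(y)/h(x) − 1| < ε. -/
/-- Every bounded positive harmonic function `h` (for the simple random walk) on a connected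
locally finite graph with degrees bounded by `d` admits points `x` around which `h` is almost
constant on balls of any fixed radius `k`: `|h(y)/h(x) − 1| < ε` whenever `dist(x,y) ≤ k`. -/
theorem bounded_harmonic_strong_approx {V : Type*} (G : SimpleGraph V)
    [∀ v : V, Fintype (G.neighborSet v)] (hconn : G.Connected)
    (d : ℕ) (hdeg : ∀ v, G.degree v ≤ d)
    (h : V → ℝ) (hpos : ∀ v, 0 < h v) (hbdd : BddAbove (Set.range h))
    (hharm : ∀ v, (G.degree v : ℝ) * h v = ∑ w ∈ G.neighborFinset v, h w) :
    ∀ ε > 0, ∀ k : ℕ, ∃ x : V, ∀ y : V, G.dist x y ≤ k →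
      |h y / h x - 1| < ε := by
  classical
  intro ε hε k
  have hV : Nonempty V := hconn.nonempty
  set M : ℝ := sSup (Set.range h) with hM
  have hle : ∀ v, h v ≤ M := fun v => le_csSup hbdd ⟨v, rfl⟩
  have hMpos : 0 < M := lt_of_lt_of_le (hpos (Classical.arbitrary V)) (hle _)
  set D : ℕ := max d 1 with hD
  have hD1 : (1:ℝ) ≤ (D:ℝ) := by exact_mod_cast Nat.le_max_right d 1
  have hdegD : ∀ v, (G.degree v : ℝ) ≤ (D:ℝ) := fun v => by
    exact_mod_cast le_trans (hdeg v) (Nat.le_max_left d 1)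
  have hDk1 : (1:ℝ) ≤ (D:ℝ)^k := one_le_pow₀ hD1
  have hDkpos : (0:ℝ) < (D:ℝ)^k := lt_of_lt_of_le one_pos hDk1
  -- one step Harnack-type bound
  have step : ∀ x z : V, G.Adj x z → M - h z ≤ (D:ℝ) * (M - h x) := by
    intro x z hadj
    have hz : z ∈ G.neighborFinset x := by simpa using hadj
    have hdegpos : 1 ≤ G.degree x := Finset.card_pos.mpr ⟨z, hz⟩
    have hsplit : ∑ w ∈ G.neighborFinset x, h w
        = h z + ∑ w ∈ (G.neighborFinset x).erase z, h w :=
      (Finset.add_sum_erase _ _ hz).symm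
    have hcard : (((G.neighborFinset x).erase z).card : ℝ) = (G.degree x : ℝ) - 1 := by
      rw [Finset.card_erase_of_mem hz,
        show (G.neighborFinset x).card = G.degree x from rfl, Nat.cast_sub hdegpos]
      simp
    have hbound : ∑ w ∈ (G.neighborFinset x).erase z, h w ≤ ((G.degree x : ℝ) - 1) * M := by
      calc ∑ w ∈ (G.neighborFinset x).erase z, h w
          ≤ (((G.neighborFinset x).erase z).card : ℝ) * M := by
            simpa using Finset.sum_le_card_nsmul ((G.neighborFinset x).erase z) h M
              (fun w _ => hle w)
        _ = ((G.degree x : ℝ) - 1) * M := by rw [hcard]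
    have h1 : (G.degree x : ℝ) * h x ≤ h z + ((G.degree x : ℝ) - 1) * M := by
      rw [hharm x, hsplit]; linarith
    have hfx : 0 ≤ M - h x := by linarith [hle x]
    nlinarith [hdegD x, hfx]
  -- iterate along a walk
  have walkbd : ∀ {x y : V} (p : G.Walk x y),
      M - h y ≤ (D:ℝ)^p.length * (M - h x) := by
    intro x y p
    induction p with
    | nil => simp
    | @cons x z y hadj p ih =>
      rw [SimpleGraph.Walk.length_cons]
      calc M - h y ≤ (D:ℝ)^p.length * (M - h z) := ih
        _ ≤ (D:ℝ)^p.length * ((D:ℝ) * (M - h x)) :=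
            mul_le_mul_of_nonneg_left (step _ _ hadj) (by positivity)
        _ = (D:ℝ)^(p.length+1) * (M - h x) := by ring
  -- choose δ and x
  set δ : ℝ := min (M/2) (ε*M/(4*(D:ℝ)^k)) with hδdef
  have hδpos : 0 < δ := by
    apply lt_min (by linarith)
    positivity
  have hδM2 : δ ≤ M/2 := min_le_left _ _
  have hδε : (D:ℝ)^k * δ ≤ ε*M/4 := by
    calc (D:ℝ)^k * δ ≤ (D:ℝ)^k * (ε*M/(4*(D:ℝ)^k)) :=
          mul_le_mul_of_nonneg_left (min_le_right _ _) (le_of_lt hDkpos)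
      _ = ε*M/4 := by field_simp
  obtain ⟨_, ⟨x, rfl⟩, hx⟩ := exists_lt_of_lt_csSup (Set.range_nonempty h)
    (show M - δ < M by linarith)
  refine ⟨x, fun y hdist => ?_⟩
  have hreach : G.Reachable x y := hconn x y
  obtain ⟨p, hp⟩ := hreach.exists_walk_length_eq_dist
  have hfy : M - h y ≤ (D:ℝ)^k * δ := by
    calc M - h y ≤ (D:ℝ)^p.length * (M - h x) := walkbd p
      _ ≤ (D:ℝ)^k * δ := by
          apply mul_le_mul (pow_le_pow_right₀ hD1 (hp ▸ hdist)) (by linarith) (by linarith [hle x])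
          positivity
  have hfx : M - h x < δ := by linarith
  have hxδ : M - δ ≤ h x := by linarith
  have hyδ : M - (D:ℝ)^k * δ ≤ h y := by linarith
  have habs : |h y - h x| ≤ (D:ℝ)^k * δ := by
    rw [abs_le]
    have h1 : δ ≤ (D:ℝ)^k * δ := by nlinarith
    constructor
    · have := hle x
      linarith
    · have := hle y
      linarith
  have hxM2 : M/2 ≤ h x := by linarith
  have hxpos := hpos x
  rw [show h y / h x - 1 = (h y - h x) / h x by field_simp, abs_div, abs_of_pos hxpos,
    div_lt_iff₀ hxpos]
  calc |h y - h x| ≤ ε*M/4 := le_trans habs hδε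
    _ < ε * (M/2) := by nlinarith
    _ ≤ ε * h x := by nlinarith
end

section
/- Let a group G act on a set X, let a, b ∈ G and p ∈ X. Let φ : X → ℝ satisfy φ(x) ≤ φ(p) for all x ∈ X and be superharmonic with respect to {a,b,a⁻¹,b⁻¹}: 4·φ(x) ≥ φ(a•x) + φ(b•x) + φ(a⁻¹•x) + φ(b⁻¹•x) for all x ∈ X. Let f be the min-function of φ. Then for every α ∈ (0,1) and every finite subset E of X: α·(1/4)·(f(a•E) + f(b•E) + f(a⁻¹•E) + f(b⁻¹•E)) + (1−α)·f(E Δ {p}) ≤ f(E). In particular, min-functions of superharmonic functions attaining their maximum at p are superharmonic for the lamplighter-type random walk on finite subsets. -/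
/-- The min-function of `φ : X → ℝ` (with basepoint `p`): `f(E) = min_{x∈E} φ(x)` for
nonempty finite `E`, and `f(∅) = φ(p)`. -/
noncomputable def minFun {X : Type*} (p : X) (φ : X → ℝ) (E : Finset X) : ℝ :=
  if h : E.Nonempty then E.inf' h φ else φ p

lemma minFun_le_basept {X : Type*} (p : X) (φ : X → ℝ) (hmax : ∀ x, φ x ≤ φ p)
    (E : Finset X) : minFun p φ E ≤ φ p := by
  unfold minFun
  split_ifs with h
  · obtain ⟨x, hx⟩ := h
    exact le_trans (Finset.inf'_le φ hx) (hmax x)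
  · exact le_refl _

lemma minFun_le_of_mem {X : Type*} (p : X) (φ : X → ℝ) {E : Finset X} {x : X}
    (hx : x ∈ E) : minFun p φ E ≤ φ x := by
  unfold minFun
  rw [dif_pos ⟨x, hx⟩]
  exact Finset.inf'_le φ hx

/-- Min-functions of superharmonic functions attaining their maximum at `p` are superharmonic
for the lamplighter-type random walk on finite subsets: for any `α ∈ (0,1)`,
`α·(1/4)·(f(aE)+f(bE)+f(a⁻¹E)+f(b⁻¹E)) + (1−α)·f(E Δ {p}) ≤ f(E)`. -/
theorem minFun_superharmonic {G X : Type*} [Group G] [MulAction G X] [DecidableEq X]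
    (a b : G) (p : X) (φ : X → ℝ) (hmax : ∀ x, φ x ≤ φ p)
    (hsup : ∀ x, φ (a • x) + φ (b • x) + φ (a⁻¹ • x) + φ (b⁻¹ • x) ≤ 4 * φ x)
    (α : ℝ) (hα : α ∈ Set.Ioo (0 : ℝ) 1) (E : Finset X) :
    α * (1 / 4) * (minFun p φ (E.image (a • ·)) + minFun p φ (E.image (b • ·)) +
        minFun p φ (E.image (a⁻¹ • ·)) + minFun p φ (E.image (b⁻¹ • ·))) +
      (1 - α) * minFun p φ (symmDiff E {p}) ≤ minFun p φ E := by
  obtain ⟨hα0, hα1⟩ := hα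
  rcases E.eq_empty_or_nonempty with rfl | hE
  · have hsd : symmDiff (∅ : Finset X) {p} = {p} := by
      ext x; simp [Finset.mem_symmDiff]
    have h1 : minFun p φ ({p} : Finset X) = φ p := by
      rw [minFun, dif_pos ⟨p, Finset.mem_singleton_self p⟩, Finset.inf'_singleton]
    have h0 : minFun p φ (∅ : Finset X) = φ p := by
      rw [minFun, dif_neg Finset.not_nonempty_empty]
    simp only [Finset.image_empty, hsd, h1, h0]
    linarith
  · -- argmin x₀
    obtain ⟨x₀, hx₀E, hx₀⟩ := Finset.exists_mem_eq_inf' hE φ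
    have hmF : minFun p φ E = φ x₀ := by rw [minFun, dif_pos hE]; exact hx₀
    have him : ∀ g : G, minFun p φ (E.image (g • ·)) ≤ φ (g • x₀) := fun g =>
      minFun_le_of_mem p φ (Finset.mem_image_of_mem _ hx₀E)
    have hsum : minFun p φ (E.image (a • ·)) + minFun p φ (E.image (b • ·)) +
        minFun p φ (E.image (a⁻¹ • ·)) + minFun p φ (E.image (b⁻¹ • ·)) ≤ 4 * φ x₀ := by
      have := hsup x₀
      have ha := him a; have hb := him b; have ha' := him a⁻¹; have hb' := him b⁻¹
      linarith
    have hsd : minFun p φ (symmDiff E {p}) ≤ φ x₀ := by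
      rcases eq_or_lt_of_le (hmax x₀) with heq | hlt
      · exact heq ▸ minFun_le_basept p φ hmax _
      · have hne : x₀ ≠ p := fun h => absurd (h ▸ hlt) (lt_irrefl _)
        have : x₀ ∈ symmDiff E {p} := by
          rw [Finset.mem_symmDiff]
          exact Or.inl ⟨hx₀E, by simp [hne]⟩
        exact minFun_le_of_mem p φ this
    rw [hmF]
    nlinarith [hsum, hsd, hα0.le, hα1.le]
end

section
/- Let a group G act on a set X, let a, b ∈ G and p ∈ X. Let φ : X → ℝ satisfy φ(x) ≤ φ(p) for all x ∈ X, and suppose there exists q ∈ X with 4·φ(q) < φ(a•q) + φ(b•q) + φ(a⁻¹•q) + φ(b⁻¹•q) (i.e. φ is not superharmonic at q with respect to {a,b,a⁻¹,b⁻¹}). Then the min-function f of φ satisfies 5·f({q}) < f(a•{q}) + f(b•{q}) + f(a⁻¹•{q}) + f(b⁻¹•{q}) + f({q} Δ {p}); in particular f is not superharmonic for the uniform lamplighter-type walk on finite subsets of X. -/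
lemma minFun_singleton {X : Type*} (p x : X) (φ : X → ℝ) :
    minFun p φ {x} = φ x := by
  simp [minFun]

/-- If `φ` attains its maximum at `p` but is not superharmonic at some point `q`
(for the simple random walk given by `{a, b, a⁻¹, b⁻¹}`), then its min-function `f` is not
superharmonic at `{q}` for the uniform lamplighter-type walk on finite subsets:
`5·f({q}) < f(a•{q}) + f(b•{q}) + f(a⁻¹•{q}) + f(b⁻¹•{q}) + f({q} Δ {p})`. -/
theorem minFun_not_superharmonic {G X : Type*} [Group G] [MulAction G X] [DecidableEq X]
    (a b : G) (p : X) (φ : X → ℝ) (hmax : ∀ x, φ x ≤ φ p)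
    (q : X)
    (hq : 4 * φ q < φ (a • q) + φ (b • q) + φ (a⁻¹ • q) + φ (b⁻¹ • q)) :
    5 * minFun p φ {q} <
      minFun p φ (({q} : Finset X).image (a • ·)) +
      minFun p φ (({q} : Finset X).image (b • ·)) +
      minFun p φ (({q} : Finset X).image (a⁻¹ • ·)) +
      minFun p φ (({q} : Finset X).image (b⁻¹ • ·)) +
      minFun p φ (symmDiff ({q} : Finset X) {p}) := by
  have hsd : minFun p φ (symmDiff ({q} : Finset X) {p}) = φ q := by
    by_cases h : q = p
    · subst h
      simp [minFun, symmDiff_self]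
    · have : symmDiff ({q} : Finset X) {p} = {q, p} := by
        ext x
        simp [Finset.mem_symmDiff, Finset.mem_insert]
        constructor
        · rintro (⟨h1, _⟩ | ⟨h1, _⟩) <;> simp [h1]
        · rintro (rfl | rfl)
          · exact Or.inl ⟨rfl, h⟩
          · exact Or.inr ⟨rfl, fun hh => h hh.symm⟩
      rw [this]
      have hne : ({q, p} : Finset X).Nonempty := ⟨q, by simp⟩
      rw [minFun, dif_pos hne]
      have : ({q, p} : Finset X).inf' hne φ = min (φ q) (φ p) := by
        simp [Finset.inf'_insert]
      rw [this, min_eq_left (hmax q)]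
  simp only [Finset.image_singleton, minFun_singleton, hsd]
  linarith
end

section
/- Let a group G act on a set Y, let k be a positive integer, let f₁,…,f_k : Y → ℝ be positive functions, let s₁,…,s_k ∈ G and let λ₁,…,λ_k be positive real numbers. Suppose (E_n) is a sequence in Y such that for every i ∈ {1,…,k} and every g ∈ G, f_i(g•E_n)/f_i(E_n) → 1 as n → ∞. Then for every g ∈ G, (Σ_{i=1}^k λ_i·f_i(s_i•(g•E_n))) / (Σ_{i=1}^k λ_i·f_i(s_i•E_n)) → 1 as n → ∞. -/
open Filter

/-- If `(Eₙ)` is a common strong approximating sequence for positive functions `f₁,…,f_k`,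
then for any group elements `s₁,…,s_k` and positive weights `λ₁,…,λ_k`, the combination
`E ↦ ∑ᵢ λᵢ·fᵢ(sᵢ•E)` also satisfies the strong approximation property along `(Eₙ)`. -/
theorem shifted_combination_strong_approx {G Y : Type*} [Group G] [MulAction G Y]
    (k : ℕ) (hk : 0 < k)
    (f : Fin k → Y → ℝ) (hf : ∀ i y, 0 < f i y)
    (s : Fin k → G) (lam : Fin k → ℝ) (hlam : ∀ i, 0 < lam i)
    (E : ℕ → Y)
    (hE : ∀ i : Fin k, ∀ g : G,
      Tendsto (fun n => f i (g • E n) / f i (E n)) atTop (nhds 1)) :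
    ∀ g : G, Tendsto (fun n =>
        (∑ i, lam i * f i (s i • (g • E n))) / (∑ i, lam i * f i (s i • E n)))
      atTop (nhds 1) := by
  intro g
  haveI : Nonempty (Fin k) := Fin.pos_iff_nonempty.mp hk
  set N : ℕ → ℝ := fun n => ∑ i, lam i * f i (s i • (g • E n)) with hN
  set D : ℕ → ℝ := fun n => ∑ i, lam i * f i (s i • E n) with hD
  have hDpos : ∀ n, 0 < D n := fun n =>
    Finset.sum_pos (fun i _ => mul_pos (hlam i) (hf _ _)) Finset.univ_nonempty
  set b : Fin k → ℕ → ℝ := fun i n => f i (s i • (g • E n)) / f i (s i • E n) with hb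
  have hbt : ∀ i, Tendsto (fun n => b i n) atTop (nhds 1) := by
    intro i
    have h1 := hE i (s i * g)
    have h2 := hE i (s i)
    have := h1.div h2 one_ne_zero
    simp only [mul_smul] at this
    have heq : (fun n => f i ((s i) • (g • E n)) / f i (E n) /
        (f i ((s i) • E n) / f i (E n))) = fun n => b i n := by
      funext n
      have h0 : f i (E n) ≠ 0 := (hf i (E n)).ne'
      have h1' : f i (s i • E n) ≠ 0 := (hf i (s i • E n)).ne'
      simp only [hb]
      field_simp
    rw [show ((fun n => f i (s i • g • E n) / f i (E n)) / fun n => f i (s i • E n) / f i (E n)) = fun n => f i ((s i) • (g • E n)) / f i (E n) / (f i ((s i) • E n) / f i (E n)) from rfl, heq] at this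
    simpa using this
  have hsum : Tendsto (fun n => ∑ i, |b i n - 1|) atTop (nhds 0) := by
    have : Tendsto (fun n => ∑ i : Fin k, |b i n - 1|) atTop
        (nhds (∑ i : Fin k, (0:ℝ))) := by
      apply tendsto_finset_sum
      intro i _
      have h := ((hbt i).sub (tendsto_const_nhds (x := (1:ℝ)))).abs
      simpa using h
    simpa using this
  have hbound : ∀ n, |N n / D n - 1| ≤ ∑ i, |b i n - 1| := by
    intro n
    have hDn := hDpos n
    have key : ∀ i : Fin k, lam i * f i (s i • (g • E n)) - lam i * f i (s i • E n)
        = lam i * f i (s i • E n) * (b i n - 1) := by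
      intro i
      have hfp := (hf i (s i • E n)).ne'
      simp only [hb]
      field_simp
    calc |N n / D n - 1| = |N n - D n| / D n := by
          rw [div_sub_one hDn.ne', abs_div, abs_of_pos hDn]
      _ = |∑ i, lam i * f i (s i • E n) * (b i n - 1)| / D n := by
          rw [hN, hD, ← Finset.sum_sub_distrib]
          simp_rw [key]
      _ ≤ (∑ i, |lam i * f i (s i • E n) * (b i n - 1)|) / D n := by
          gcongr
          exact Finset.abs_sum_le_sum_abs _ _
      _ = ∑ i, (lam i * f i (s i • E n) / D n) * |b i n - 1| := by
          rw [Finset.sum_div]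
          congr 1; funext i
          rw [abs_mul, abs_of_pos (mul_pos (hlam i) (hf _ _))]
          ring
      _ ≤ ∑ i, 1 * |b i n - 1| := by
          apply Finset.sum_le_sum
          intro i _
          apply mul_le_mul_of_nonneg_right _ (abs_nonneg _)
          rw [div_le_one hDn]
          exact Finset.single_le_sum (f := fun j => lam j * f j (s j • E n))
            (fun j _ => le_of_lt (mul_pos (hlam j) (hf _ _))) (Finset.mem_univ i)
      _ = ∑ i, |b i n - 1| := by simp
  have habs : Tendsto (fun n => |N n / D n - 1|) atTop (nhds 0) :=
    squeeze_zero (fun n => abs_nonneg _) hbound hsum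
  have hfin : Tendsto (fun n => N n / D n) atTop (nhds 1) := by
    rw [tendsto_iff_norm_sub_tendsto_zero]
    simpa [Real.norm_eq_abs] using habs
  exact hfin
end

section
/- Let a group G act on a set Y, let S be a finite nonempty subset of G, and let P be the averaging operator Pf(y) = (1/|S|)·Σ_{s∈S} f(s•y). Let f₁,…,f_k : Y → ℝ be positive functions and suppose (E_n) is a sequence in Y such that for every i ∈ {1,…,k} and every g ∈ G, f_i(g•E_n)/f_i(E_n) → 1 as n → ∞. Then for all natural numbers n₁,…,n_k and every g ∈ G, ((P^{n₁}f₁ + … + P^{n_k}f_k)(g•E_n)) / ((P^{n₁}f₁ + … + P^{n_k}f_k)(E_n)) → 1 as n → ∞. -/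
open Filter

/-- The averaging (Markov) operator of a group action with respect to a finite set `S`:
`P f y = (1/|S|)·∑_{s∈S} f(s•y)`. -/
noncomputable def avgOp {G Y : Type*} [Group G] [MulAction G Y] (S : Finset G)
    (f : Y → ℝ) : Y → ℝ :=
  fun y => (∑ s ∈ S, f (s • y)) / S.card

lemma pair_ratio (a a' b b' : ℕ → ℝ) (ha' : ∀ n, 0 < a' n) (hb' : ∀ n, 0 < b' n)
    (ha : Tendsto (fun n => a n / a' n) atTop (nhds 1))
    (hb : Tendsto (fun n => b n / b' n) atTop (nhds 1)) :
    Tendsto (fun n => (a n + b n) / (a' n + b' n)) atTop (nhds 1) := by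
  rw [show (1:ℝ) = 0 + 1 by ring]
  have h0 : Tendsto (fun n => (a n + b n) / (a' n + b' n) - 1) atTop (nhds 0) := by
    have hg : Tendsto (fun n => |a n / a' n - 1| + |b n / b' n - 1|) atTop (nhds 0) := by
      have h1 := (ha.sub_const 1).abs
      have h2 := (hb.sub_const 1).abs
      simpa using h1.add h2
    refine squeeze_zero_norm (fun n => ?_) hg
    have hA := ha' n; have hB := hb' n
    have hAB : 0 < a' n + b' n := by linarith
    have e1 : (a n + b n) / (a' n + b' n) - 1 = ((a n - a' n) + (b n - b' n)) / (a' n + b' n) := by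
      field_simp; ring
    rw [Real.norm_eq_abs, e1, abs_div, abs_of_pos hAB]
    have e2 : |a n / a' n - 1| = |a n - a' n| / a' n := by
      rw [show a n / a' n - 1 = (a n - a' n) / a' n by field_simp, abs_div, abs_of_pos hA]
    have e3 : |b n / b' n - 1| = |b n - b' n| / b' n := by
      rw [show b n / b' n - 1 = (b n - b' n) / b' n by field_simp, abs_div, abs_of_pos hB]
    rw [e2, e3]
    have t1 : |a n - a' n + (b n - b' n)| ≤ |a n - a' n| + |b n - b' n| := abs_add_le _ _
    have t2 : |a n - a' n| / (a' n + b' n) ≤ |a n - a' n| / a' n :=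
      div_le_div_of_nonneg_left (abs_nonneg _) hA (by linarith)
    have t3 : |b n - b' n| / (a' n + b' n) ≤ |b n - b' n| / b' n :=
      div_le_div_of_nonneg_left (abs_nonneg _) hB (by linarith)
    calc (|a n - a' n + (b n - b' n)|) / (a' n + b' n)
        ≤ (|a n - a' n| + |b n - b' n|) / (a' n + b' n) := by gcongr
      _ = |a n - a' n| / (a' n + b' n) + |b n - b' n| / (a' n + b' n) := add_div _ _ _
      _ ≤ |a n - a' n| / a' n + |b n - b' n| / b' n := add_le_add t2 t3
  have := h0.add (tendsto_const_nhds : Tendsto (fun _ : ℕ => (1:ℝ)) atTop (nhds 1))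
  simpa using this

lemma sum_ratio {ι : Type*} (t : Finset ι) (ht : t.Nonempty) (a b : ι → ℕ → ℝ)
    (hb : ∀ i ∈ t, ∀ n, 0 < b i n)
    (h : ∀ i ∈ t, Tendsto (fun n => a i n / b i n) atTop (nhds 1)) :
    Tendsto (fun n => (∑ i ∈ t, a i n) / (∑ i ∈ t, b i n)) atTop (nhds 1) := by
  refine Finset.Nonempty.cons_induction
    (motive := fun s _ => (∀ i ∈ s, ∀ n, 0 < b i n) →
      (∀ i ∈ s, Tendsto (fun n => a i n / b i n) atTop (nhds 1)) →
      Tendsto (fun n => (∑ i ∈ s, a i n) / (∑ i ∈ s, b i n)) atTop (nhds 1))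
    ?_ ?_ ht hb h
  · intro i hb' h'
    simpa using h' i (by simp)
  · intro i t hit htne ih hb' h'
    simp only [Finset.sum_cons]
    exact pair_ratio _ _ _ _ (fun n => hb' i (Finset.mem_cons_self i t) n)
      (fun n => Finset.sum_pos (fun j hj => hb' j (Finset.mem_cons_of_mem hj) n) htne)
      (h' i (Finset.mem_cons_self i t))
      (ih (fun j hj => hb' j (Finset.mem_cons_of_mem hj))
        (fun j hj => h' j (Finset.mem_cons_of_mem hj)))

lemma div_div_div_same {x y c : ℝ} (hc : c ≠ 0) (hy : y ≠ 0) : x / c / (y / c) = x / y := by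
  field_simp

lemma avgOp_stable {G Y : Type*} [Group G] [MulAction G Y] (S : Finset G) (hS : S.Nonempty)
    (E : ℕ → Y) (f : Y → ℝ) (hf : ∀ y, 0 < f y)
    (h : ∀ g : G, Tendsto (fun n => f (g • E n) / f (E n)) atTop (nhds 1)) :
    (∀ y, 0 < avgOp S f y) ∧
      ∀ g : G, Tendsto (fun n => avgOp S f (g • E n) / avgOp S f (E n)) atTop (nhds 1) := by
  have hcard : (0:ℝ) < S.card := by exact_mod_cast Finset.card_pos.mpr hS
  constructor
  · intro y
    exact div_pos (Finset.sum_pos (fun s _ => hf _) hS) hcard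
  · intro g
    have key : ∀ n, avgOp S f (g • E n) / avgOp S f (E n)
        = (∑ s ∈ S, f (s • g • E n)) / (∑ s ∈ S, f (s • E n)) := by
      intro n
      exact div_div_div_same hcard.ne' (Finset.sum_pos (fun s _ => hf _) hS).ne'
    simp only [key]
    refine sum_ratio S hS (fun s n => f (s • g • E n)) (fun s n => f (s • E n))
      (fun s _ n => hf _) (fun s _ => ?_)
    have hE0 : ∀ n, f (E n) ≠ 0 := fun n => (hf _).ne'
    have := (h (s * g)).div (h s) one_ne_zero
    rw [show (1:ℝ)/1 = 1 by norm_num] at this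
    refine this.congr fun n => ?_
    simp only [Pi.div_apply, mul_smul]
    exact div_div_div_same (hE0 n) (hf _).ne'

lemma iterate_stable {G Y : Type*} [Group G] [MulAction G Y] (S : Finset G) (hS : S.Nonempty)
    (E : ℕ → Y) (f : Y → ℝ) (hf : ∀ y, 0 < f y)
    (h : ∀ g : G, Tendsto (fun n => f (g • E n) / f (E n)) atTop (nhds 1)) (m : ℕ) :
    (∀ y, 0 < (avgOp S)^[m] f y) ∧
      ∀ g : G, Tendsto (fun n => (avgOp S)^[m] f (g • E n) / (avgOp S)^[m] f (E n))
        atTop (nhds 1) := by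
  induction m with
  | zero => exact ⟨hf, h⟩
  | succ m ih =>
    rw [Function.iterate_succ_apply']
    exact avgOp_stable S hS E _ ih.1 ih.2

/-- If `(Eₙ)` is a common strong approximating sequence for positive functions `f₁,…,f_k`,
then for any iterates `P^{n₁},…,P^{n_k}` of the Markov operator, the sum
`P^{n₁}f₁ + … + P^{n_k}f_k` also satisfies the strong approximation property along `(Eₙ)`. -/
theorem iterated_markov_sum_strong_approx {G Y : Type*} [Group G] [MulAction G Y]
    (S : Finset G) (hS : S.Nonempty)
    (k : ℕ) (hk : 0 < k)
    (f : Fin k → Y → ℝ) (hf : ∀ i y, 0 < f i y)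
    (E : ℕ → Y)
    (hE : ∀ i : Fin k, ∀ g : G,
      Tendsto (fun n => f i (g • E n) / f i (E n)) atTop (nhds 1))
    (m : Fin k → ℕ) :
    ∀ g : G, Tendsto (fun n =>
        (∑ i, (avgOp S)^[m i] (f i) (g • E n)) / (∑ i, (avgOp S)^[m i] (f i) (E n)))
      atTop (nhds 1) := by
  intro g
  have : Nonempty (Fin k) := ⟨⟨0, hk⟩⟩
  exact sum_ratio Finset.univ Finset.univ_nonempty
    (fun i n => (avgOp S)^[m i] (f i) (g • E n))
    (fun i n => (avgOp S)^[m i] (f i) (E n))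
    (fun i _ n => (iterate_stable S hS E (f i) (hf i) (hE i) (m i)).1 _)
    (fun i _ => (iterate_stable S hS E (f i) (hf i) (hE i) (m i)).2 g)
end

section
/- Let n ≤ N be positive integers and let Q_m denote the set {x : Fin m → ℝ | 0 < x_i ≤ 1 for all i}. Let r : (Fin n → ℝ) → ℝ be nonnegative on Q_n, symmetric (r(x ∘ π) = r(x) for every permutation π of Fin n), non-decreasing on Q_n (if x, y ∈ Q_n with x_i ≤ y_i for all i then r(x) ≤ r(y)), and concave on Q_n. Define g : Q_N → ℝ by g(x) = r(x_{(1)},…,x_{(n)}), where x_{(1)} ≤ x_{(2)} ≤ … ≤ x_{(N)} is the non-decreasing rearrangement of x. Then g is concave on Q_N: for all u, v ∈ Q_N and t ∈ [0,1], g(t·u + (1−t)·v) ≥ t·g(u) + (1−t)·g(v). -/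
/-- The half-open unit hypercube `(0,1]^m` in `ℝ^m`. -/
def Qcube (m : ℕ) : Set (Fin m → ℝ) := {x | ∀ i, 0 < x i ∧ x i ≤ 1}

/-- The generalized min-function built from `r`: evaluate `r` on the `n` smallest coordinates
of `x : Fin N → ℝ`, listed in non-decreasing order (via the sorting permutation of `x`). -/
noncomputable def sortedEval {n N : ℕ} (hnN : n ≤ N)
    (r : (Fin n → ℝ) → ℝ) (x : Fin N → ℝ) : ℝ :=
  r fun i => x (Tuple.sort x (Fin.castLE hnN i))

/-- If `r : (0,1]^n → ℝ` is nonnegative, symmetric, non-decreasing in each variable and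
concave, then the generalized min-function `g(x) = r(x₍₁₎,…,x₍ₙ₎)` (evaluating `r` on the
non-decreasing rearrangement of `x`) is concave on `(0,1]^N` for any `N ≥ n`. -/
theorem sortedEval_concave (n N : ℕ) (hn : 0 < n) (hnN : n ≤ N)
    (r : (Fin n → ℝ) → ℝ)
    (hnonneg : ∀ x ∈ Qcube n, 0 ≤ r x)
    (hsymm : ∀ x ∈ Qcube n, ∀ π : Equiv.Perm (Fin n), r (x ∘ π) = r x)
    (hmono : ∀ x ∈ Qcube n, ∀ y ∈ Qcube n, (∀ i, x i ≤ y i) → r x ≤ r y)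
    (hconc : ∀ x ∈ Qcube n, ∀ y ∈ Qcube n, ∀ t ∈ Set.Icc (0 : ℝ) 1,
      t * r x + (1 - t) * r y ≤ r fun i => t * x i + (1 - t) * y i) :
    ∀ u ∈ Qcube N, ∀ v ∈ Qcube N, ∀ t ∈ Set.Icc (0 : ℝ) 1,
      t * sortedEval hnN r u + (1 - t) * sortedEval hnN r v ≤
        sortedEval hnN r (fun j => t * u j + (1 - t) * v j) := by
  -- Key lemma: for injective φ, sortedEval r x ≤ r (x ∘ φ).
  have key : ∀ x ∈ Qcube N, ∀ φ : Fin n → Fin N, Function.Injective φ →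
      sortedEval hnN r x ≤ r (x ∘ φ) := by
    intro x hx φ hφ
    set σ := Tuple.sort (x ∘ φ) with hσ
    have hxφQ : (x ∘ φ) ∈ Qcube n := fun i => hx (φ i)
    have hsymm' : r ((x ∘ φ) ∘ σ) = r (x ∘ φ) := hsymm _ hxφQ σ
    rw [← hsymm']
    have hmonσ : Monotone ((x ∘ φ) ∘ σ) := Tuple.monotone_sort (x ∘ φ)
    set ψ : Fin n → Fin N := fun i => φ (σ i) with hψ
    have hψinj : Function.Injective ψ := hφ.comp σ.injective
    set τ : Fin N ≃ Fin N := (Tuple.sort x).symm with hτ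
    have hsortmon : Monotone (x ∘ Tuple.sort x) := Tuple.monotone_sort x
    apply hmono
    · intro i; exact hx _
    · exact fun i => hx _
    · intro i
      -- find j ≤ i with i ≤ (τ (ψ j)).val
      have hexists : ∃ j : Fin n, j ≤ i ∧ (i : ℕ) ≤ ((τ (ψ j)) : ℕ) := by
        by_contra hcon
        push_neg at hcon
        have hlt : ∀ j : Fin n, j ≤ i → ((τ (ψ j)) : ℕ) < (i : ℕ) := hcon
        have hipos : (0:ℕ) < (i:ℕ) + 1 := Nat.succ_pos _
        have hinj2 : Function.Injective
            (fun j : Fin ((i:ℕ)+1) =>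
              (⟨(τ (ψ ⟨(j:ℕ), lt_of_lt_of_le j.isLt i.isLt⟩) : ℕ),
                hlt _ (by exact Fin.mk_le_mk.mpr (Nat.le_of_lt_succ j.isLt))⟩ : Fin (i:ℕ))) := by
          intro a b hab
          have := congrArg Fin.val hab
          simp only at this
          have h2 : τ (ψ ⟨(a:ℕ), _⟩) = τ (ψ ⟨(b:ℕ), _⟩) := Fin.val_injective this
          have h3 := hψinj (τ.injective h2)
          have := congrArg Fin.val h3
          exact Fin.val_injective this
        have := Fintype.card_le_of_injective _ hinj2
        simp at this
      obtain ⟨j, hji, hij⟩ := hexists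
      have h1 : x (Tuple.sort x (Fin.castLE hnN i)) ≤ x (Tuple.sort x (τ (ψ j))) := by
        apply hsortmon
        exact hij
      have h2 : x (Tuple.sort x (τ (ψ j))) = x (ψ j) := by
        rw [hτ]; simp
      have h3 : x (ψ j) ≤ x (ψ i) := hmonσ hji
      calc x (Tuple.sort x (Fin.castLE hnN i)) ≤ x (ψ j) := h2 ▸ h1
        _ ≤ ((x ∘ φ) ∘ σ) i := h3
  intro u hu v hv t ht
  obtain ⟨ht0, ht1⟩ := ht
  set w : Fin N → ℝ := fun j => t * u j + (1 - t) * v j with hw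
  have hwQ : w ∈ Qcube N := by
    intro j
    obtain ⟨hu1, hu2⟩ := hu j
    obtain ⟨hv1, hv2⟩ := hv j
    simp only [hw]
    constructor
    · rcases le_total (u j) (v j) with h | h
      · nlinarith [mul_le_mul_of_nonneg_left h (by linarith : (0:ℝ) ≤ 1 - t)]
      · nlinarith [mul_le_mul_of_nonneg_left h (by linarith : (0:ℝ) ≤ t)]
    · nlinarith
  set φ : Fin n → Fin N := fun i => Tuple.sort w (Fin.castLE hnN i) with hφ
  have hφinj : Function.Injective φ :=
    (Tuple.sort w).injective.comp (Fin.castLE_injective hnN)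
  have huQ : (u ∘ φ) ∈ Qcube n := fun i => hu _
  have hvQ : (v ∘ φ) ∈ Qcube n := fun i => hv _
  have heq : sortedEval hnN r w = r fun i => t * (u ∘ φ) i + (1 - t) * (v ∘ φ) i := rfl
  rw [heq]
  calc t * sortedEval hnN r u + (1 - t) * sortedEval hnN r v
      ≤ t * r (u ∘ φ) + (1 - t) * r (v ∘ φ) := by
        gcongr
        · exact key u hu φ hφinj
        · exact key v hv φ hφinj
    _ ≤ _ := hconc _ huQ _ hvQ t ⟨ht0, ht1⟩
end

section
/- Let n be a positive integer and let Q_n = {x : Fin n → ℝ | 0 < x_i ≤ 1 for all i}. Let r : (Fin n → ℝ) → ℝ be nonnegative on Q_n, non-decreasing on Q_n (if x, y ∈ Q_n with x_i ≤ y_i for all i then r(x) ≤ r(y)), and concave on Q_n. Then r is continuous on Q_n. -/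
set_option maxHeartbeats 1000000 in
/-- A nonnegative, coordinatewise non-decreasing, concave function on the half-open unit
hypercube `(0,1]^n` is continuous on it. -/
theorem concave_monotone_continuousOn (n : ℕ) (hn : 0 < n)
    (r : (Fin n → ℝ) → ℝ)
    (hnonneg : ∀ x ∈ Qcube n, 0 ≤ r x)
    (hmono : ∀ x ∈ Qcube n, ∀ y ∈ Qcube n, (∀ i, x i ≤ y i) → r x ≤ r y)
    (hconc : ∀ x ∈ Qcube n, ∀ y ∈ Qcube n, ∀ t ∈ Set.Icc (0 : ℝ) 1,
      t * r x + (1 - t) * r y ≤ r fun i => t * x i + (1 - t) * y i) :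
    ContinuousOn r (Qcube n) := by
  intro a ha
  have hane : Nonempty (Fin n) := ⟨⟨0, hn⟩⟩
  rw [Metric.continuousWithinAt_iff]
  intro η hη
  -- minimum coordinate of a
  set m : ℝ := Finset.univ.inf' Finset.univ_nonempty a with hm_def
  have hm_pos : 0 < m := by
    rw [hm_def, Finset.lt_inf'_iff]
    exact fun i _ => (ha i).1
  have hm_le : ∀ i, m ≤ a i := fun i => Finset.inf'_le _ (Finset.mem_univ i)
  -- minimum gap to 1 over coordinates with a i < 1
  set c : ℝ := Finset.univ.inf' Finset.univ_nonempty
      (fun i => if a i < 1 then 1 - a i else 1) with hc_def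
  have hc_pos : 0 < c := by
    rw [hc_def, Finset.lt_inf'_iff]
    intro i _
    split_ifs with h
    · linarith
    · norm_num
  have hc_le : ∀ i, a i < 1 → c ≤ 1 - a i := by
    intro i hi
    have h : c ≤ (fun i => if a i < 1 then 1 - a i else 1) i :=
      Finset.inf'_le _ (Finset.mem_univ i)
    simpa [if_pos hi] using h
  set δ : ℝ := m / 2 with hδ_def
  have hδ : 0 < δ := by positivity
  have hδm : δ < m := by rw [hδ_def]; linarith
  have hra : 0 ≤ r a := hnonneg a ha
  have hra1 : 0 < r a + 1 := by linarith
  set ε : ℝ := min (min δ c) (η * δ / (2 * (r a + 1))) with hε_def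
  have hε_pos : 0 < ε := lt_min (lt_min hδ hc_pos) (by positivity)
  have hεδ : ε ≤ δ := le_trans (min_le_left _ _) (min_le_left _ _)
  have hεc : ε ≤ c := le_trans (min_le_left _ _) (min_le_right _ _)
  have hεη : ε ≤ η * δ / (2 * (r a + 1)) := min_le_right _ _
  -- key quantitative bound
  have hkey : ε * r a ≤ η / 2 * δ := by
    have h1 : ε * (r a + 1) ≤ (η * δ / (2 * (r a + 1))) * (r a + 1) :=
      mul_le_mul_of_nonneg_right hεη hra1.le
    have h2 : (η * δ / (2 * (r a + 1))) * (r a + 1) = η / 2 * δ := by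
      field_simp
    nlinarith [hε_pos]
  -- the four auxiliary points
  set aε : Fin n → ℝ := fun i => a i - ε with haε_def
  set aδ : Fin n → ℝ := fun i => a i - δ with haδ_def
  set w : Fin n → ℝ := fun i => a i - δ * (if a i < 1 then (1:ℝ) else 0) with hw_def
  set u : Fin n → ℝ := fun i => a i + ε * (if a i < 1 then (1:ℝ) else 0) with hu_def
  have hQaε : aε ∈ Qcube n := by
    intro i
    constructor
    · have := hm_le i; simp only [haε_def]; linarith
    · have := (ha i).2; simp only [haε_def]; linarith [hε_pos]
  have hQaδ : aδ ∈ Qcube n := by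
    intro i
    constructor
    · have := hm_le i; simp only [haδ_def]; linarith
    · have := (ha i).2; simp only [haδ_def]; linarith
  have hQw : w ∈ Qcube n := by
    intro i
    simp only [hw_def]
    split_ifs with h
    · constructor
      · have := hm_le i; linarith
      · have := (ha i).2; linarith
    · constructor
      · have := (ha i).1; linarith
      · have := (ha i).2; linarith
  have hQu : u ∈ Qcube n := by
    intro i
    simp only [hu_def]
    split_ifs with h
    · constructor
      · have := (ha i).1; linarith
      · have := hc_le i h; linarith
    · constructor
      · have := (ha i).1; linarith
      · have := (ha i).2; linarith
  -- Lower estimate: r a - r aε ≤ η / 2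
  have hδne : δ ≠ 0 := ne_of_gt hδ
  have hlow : r a - r aε ≤ η / 2 := by
    have ht : ε / δ ∈ Set.Icc (0 : ℝ) 1 :=
      ⟨by positivity, by rw [div_le_one hδ]; exact hεδ⟩
    have h := hconc aδ hQaδ a ha (ε / δ) ht
    have heq : (fun i => ε / δ * aδ i + (1 - ε / δ) * a i) = aε := by
      funext i
      simp only [haδ_def, haε_def]
      field_simp
      ring
    rw [heq] at h
    have hwδ : 0 ≤ r aδ := hnonneg aδ hQaδ
    -- from h : ε/δ * r aδ + (1 - ε/δ) * r a ≤ r aε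
    have hq : (1 - ε / δ) * r a ≤ r aε := by nlinarith [mul_nonneg (div_nonneg hε_pos.le hδ.le) hwδ]
    have hdiv : ε / δ * r a ≤ η / 2 := by
      rw [div_mul_eq_mul_div, div_le_iff₀ hδ]
      linarith [hkey]
    nlinarith [hq, hdiv]
  -- Upper estimate: r u - r a ≤ η / 2
  have hhigh : r u - r a ≤ η / 2 := by
    have hsum : 0 < ε + δ := by linarith
    have ht : ε / (ε + δ) ∈ Set.Icc (0 : ℝ) 1 :=
      ⟨by positivity, by rw [div_le_one hsum]; linarith⟩
    have h := hconc w hQw u hQu (ε / (ε + δ)) ht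
    have heq : (fun i => ε / (ε + δ) * w i + (1 - ε / (ε + δ)) * u i) = a := by
      funext i
      simp only [hw_def, hu_def]
      split_ifs with hcase <;> field_simp <;> try ring
    rw [heq] at h
    have hw0 : 0 ≤ r w := hnonneg w hQw
    have e1 : ε / (ε + δ) * r w = ε * r w / (ε + δ) := by ring
    have e2 : (1 - ε / (ε + δ)) * r u = δ * r u / (ε + δ) := by
      field_simp
      try ring
    rw [e1, e2, ← add_div, div_le_iff₀ hsum] at h
    -- h : ε * r w + δ * r u ≤ r a * (ε + δ)
    have h2 : δ * r u ≤ (ε + δ) * r a := by nlinarith [mul_nonneg hε_pos.le hw0]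
    have h3 : δ * (r u - r a) ≤ δ * (η / 2) := by nlinarith [h2, hkey]
    linarith [le_of_mul_le_mul_left h3 hδ]
  -- conclude
  refine ⟨ε, hε_pos, fun y hy hdist => ?_⟩
  have hcoord : ∀ i, dist (y i) (a i) < ε := (dist_pi_lt_iff hε_pos).mp hdist
  have habs : ∀ i, |y i - a i| < ε := by
    intro i
    have := hcoord i
    rwa [Real.dist_eq] at this
  have hle1 : ∀ i, aε i ≤ y i := by
    intro i
    have := abs_lt.mp (habs i)
    simp only [haε_def]
    linarith [this.1]
  have hle2 : ∀ i, y i ≤ u i := by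
    intro i
    have h := abs_lt.mp (habs i)
    simp only [hu_def]
    split_ifs with hcase
    · linarith [h.2]
    · have h1 : a i = 1 := le_antisymm (ha i).2 (not_lt.mp hcase)
      have := (hy i).2
      rw [h1]
      linarith
  have hmlow : r aε ≤ r y := hmono aε hQaε y hy hle1
  have hmhigh : r y ≤ r u := hmono y hy u hQu hle2
  rw [Real.dist_eq, abs_lt]
  constructor <;> linarith
end

section
/- Let F₂ be the free group on two generators a, b, let W ⊆ F₂ be the set of elements whose reduced word does not begin with the letter a, and let Z = ℕ ⊔ W. Define bijections α, β of Z by: α(n) = n+1 for n ∈ ℕ, α(e) = 0 ∈ ℕ (where e is the identity of F₂), α(w) = w·a for w ∈ W \ {e}; β(n) = n for n ∈ ℕ, β(w) = w·b for w ∈ W. Let F₂ act on Z via the homomorphism sending a ↦ α and b ↦ β. Define φ : Z → ℝ by φ(n) = 1 for n ∈ ℕ and φ(w) = 3^{−|w|} for w ∈ W, where |w| is the reduced word length, and let f : Finset Z → ℝ be the min-function of φ: f(E) = min_{z∈E} φ(z) for E ≠ ∅ and f(∅) = 1. Then there is no sequence (E_n) of finite subsets of Z such that for every finite subset C ⊆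 Z and every g ∈ F₂ the sequence f(C Δ (g•E_n)) / f(E_n) converges to 1. -/
open Filter

section Helpers
open FreeGroup

lemma reduce_concat (L : List (Fin 2 × Bool)) (x : Fin 2 × Bool)
    (hL : reduce L = L) (h : L.getLast? ≠ some (x.1, !x.2)) :
    reduce (L ++ [x]) = L ++ [x] := by
  have key : reduce (invRev (L ++ [x])) = invRev (L ++ [x]) := by
    rcases L.eq_nil_or_concat' with rfl | ⟨L', l, rfl⟩
    · simp [invRev, reduce]
    · have h1 : invRev (L' ++ [l] ++ [x]) = (x.1, !x.2) :: ((l.1, !l.2) :: invRev L') := by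
        simp [invRev]
      have h2 : invRev (L' ++ [l]) = (l.1, !l.2) :: invRev L' := by simp [invRev]
      have h3 : reduce ((l.1, !l.2) :: invRev L') = (l.1, !l.2) :: invRev L' := by
        rw [← h2, reduce_invRev, hL]
      rw [h1, reduce.cons, h3]
      have hlx : l ≠ (x.1, !x.2) := by
        intro he; exact h (by simp [he])
      have : ¬ ((x.1, !x.2).1 = (l.1, !l.2).1 ∧ (x.1, !x.2).2 = !(l.1, !l.2).2) := by
        rintro ⟨h4, h5⟩
        simp only [Bool.not_not] at h5
        exact hlx (Prod.ext h4.symm (by simp [← h5]))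
      simp only [this, if_false]
  have := reduce_invRev (w := L ++ [x])
  rw [key] at this
  exact invRev_injective this.symm

lemma toWord_mul_of (w : FreeGroup (Fin 2)) (j : Fin 2)
    (h : w.toWord.getLast? ≠ some (j, false)) :
    (w * of j).toWord = w.toWord ++ [(j, true)] := by
  have h1 : w * of j = mk (w.toWord ++ [(j, true)]) := by
    rw [← mul_mk]
    rw [mk_toWord]
    rfl
  rw [h1, toWord_mk]
  exact reduce_concat _ (j, true) (reduce_toWord w) (by simpa using h)
end Helpers


open Filter

/-- The set `W` of elements of the free group `F₂ = F(a,b)` (with `a = of 0`, `b = of 1`)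
whose reduced word does not begin with the letter `a`. -/
def Wset : Set (FreeGroup (Fin 2)) :=
  {w | (FreeGroup.toWord w).head? ≠ some (0, true)}

/-- The Schreier graph `Z = ℕ ⊔ W`: the Cayley graph of `F₂` with the edge from `e` to `a`
cut and the component of `a` replaced by an infinite ray `ℕ`. -/
def ZS : Type := ℕ ⊕ Wset

instance : DecidableEq ZS := inferInstanceAs (DecidableEq (ℕ ⊕ Wset))

/-- The function `φ : Z → ℝ` equal to `1` on the ray `ℕ` and to `3^{−|w|}` at `w ∈ W`. -/
noncomputable def phiZ : ZS → ℝ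
  | .inl _ => 1
  | .inr w => ((3 : ℝ) ^ (FreeGroup.toWord w.1).length)⁻¹

/-- The min-function of `φ`: `f(E) = min_{z∈E} φ(z)` for nonempty `E`, `f(∅) = 1`. -/
noncomputable def fZ (E : Finset ZS) : ℝ :=
  if h : E.Nonempty then E.inf' h phiZ else 1

/-- The action of `F₂` on `Z` via the homomorphism sending `a ↦ α`, `b ↦ β`. -/
noncomputable def rhoZ (α β : Equiv.Perm ZS) : FreeGroup (Fin 2) →* Equiv.Perm ZS :=
  FreeGroup.lift (fun i => if i = 0 then α else β)


section Aux
open FreeGroup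

lemma Wset_mul_of {w : FreeGroup (Fin 2)} (hw : w ∈ Wset) (hL : w.toWord ≠ []) {j : Fin 2}
    (h : w.toWord.getLast? ≠ some (j, false)) :
    w * FreeGroup.of j ∈ Wset ∧
      (w * FreeGroup.of j).toWord.length = w.toWord.length + 1 := by
  have hword := toWord_mul_of w j h
  constructor
  · show ((w * of j).toWord).head? ≠ some (0, true)
    rw [hword]
    have hw' : w.toWord.head? ≠ some (0, true) := hw
    cases hLl : w.toWord with
    | nil => exact absurd hLl hL
    | cons a t => rw [hLl] at hw'; simpa using hw'
  · rw [hword]; simp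

lemma phiZ_pos (z : ZS) : 0 < phiZ z := by
  cases z with
  | inl n => norm_num [phiZ]
  | inr w => simp only [phiZ]; positivity

lemma fZ_pos (E : Finset ZS) : 0 < fZ E := by
  unfold fZ; split
  · exact (Finset.lt_inf'_iff _).2 fun z _ => phiZ_pos z
  · norm_num

lemma fZ_le_of_mem {E : Finset ZS} {z : ZS} (h : z ∈ E) : fZ E ≤ phiZ z := by
  unfold fZ; rw [dif_pos ⟨z, h⟩]; exact Finset.inf'_le _ h

lemma fZ_eq_min {E : Finset ZS} (h : E.Nonempty) : ∃ z ∈ E, fZ E = phiZ z := by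
  unfold fZ; rw [dif_pos h]; exact Finset.exists_mem_eq_inf' h phiZ

end Aux

/-- **An amenable action which is not extensively amenable.** Let `α, β` be the bijections
of `Z = ℕ ⊔ W` given by: `α` shifts the ray (`n ↦ n+1`), sends the identity `e ∈ W` to the
origin `0` of the ray, and right-multiplies the other elements of `W` by `a`; `β` fixes the
ray and right-multiplies elements of `W` by `b`. Let `F₂` act on `Z` by `a ↦ α`, `b ↦ β`,
let `φ = 1` on the ray and `φ(w) = 3^{−|w|}` on `W`, and let `f` be the min-function of `φ`.
Then there is no sequence `(Eₙ)` of finite subsets of `Z` with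
`f(C Δ g•Eₙ)/f(Eₙ) → 1` for every finite `C ⊆ Z` and every `g ∈ F₂`; i.e. the lamplighter
group `Finset(Z) ⋊ F₂` of the action admits no strong approximating sequence for `f`. -/
theorem no_strong_approx_for_free_group_tail
    (α β : Equiv.Perm ZS)
    (hα1 : ∀ n : ℕ, α (Sum.inl n) = Sum.inl (n + 1))
    (hα2 : ∀ h1 : (1 : FreeGroup (Fin 2)) ∈ Wset, α (Sum.inr ⟨1, h1⟩) = Sum.inl 0)
    (hα3 : ∀ (w : FreeGroup (Fin 2)) (hw : w ∈ Wset), w ≠ 1 →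
      ∀ hwa : w * FreeGroup.of 0 ∈ Wset,
        α (Sum.inr ⟨w, hw⟩) = Sum.inr ⟨w * FreeGroup.of 0, hwa⟩)
    (hβ1 : ∀ n : ℕ, β (Sum.inl n) = Sum.inl n)
    (hβ2 : ∀ (w : FreeGroup (Fin 2)) (hw : w ∈ Wset),
      ∀ hwb : w * FreeGroup.of 1 ∈ Wset,
        β (Sum.inr ⟨w, hw⟩) = Sum.inr ⟨w * FreeGroup.of 1, hwb⟩) :
    ¬ ∃ E : ℕ → Finset ZS, ∀ (C : Finset ZS) (g : FreeGroup (Fin 2)),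
        Tendsto (fun n => fZ (symmDiff C ((E n).image (rhoZ α β g))) / fZ (E n))
          atTop (nhds 1) := by
  rintro ⟨E, hE⟩
  have key : ∀ (C : Finset ZS) (g : FreeGroup (Fin 2)), ∀ᶠ n in atTop,
      (1:ℝ)/2 < fZ (symmDiff C ((E n).image (rhoZ α β g))) / fZ (E n) :=
    fun C g => (hE C g).eventually (eventually_gt_nhds (by norm_num))
  -- the test word b² ∈ W
  have hb2last : (FreeGroup.of (1 : Fin 2)).toWord.getLast? ≠ some (1, false) := by
    rw [FreeGroup.toWord_of]; simp
  have hb2word := toWord_mul_of (FreeGroup.of (1 : Fin 2)) 1 hb2last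
  rw [FreeGroup.toWord_of] at hb2word
  have hb2w : FreeGroup.of (1 : Fin 2) * FreeGroup.of 1 ∈ Wset := by
    show _ ≠ _
    rw [hb2word]
    simp [Fin.ext_iff]
  set z₀ : ZS := Sum.inr ⟨FreeGroup.of 1 * FreeGroup.of 1, hb2w⟩ with hz₀
  have hphiz₀ : phiZ z₀ = 1/9 := by
    simp only [hz₀, phiZ, hb2word]
    norm_num
  obtain ⟨n, h1, ha, hb⟩ := ((key {z₀} 1).and ((key ∅ (FreeGroup.of 0)).and
    (key ∅ (FreeGroup.of 1)))).exists
  have hm0 : 0 < fZ (E n) := fZ_pos _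
  have himg1 : (E n).image (⇑(rhoZ α β 1)) = E n := by
    rw [map_one]
    simp
  -- Step A : fZ (E n) ≤ 1/3
  have hm3 : fZ (E n) ≤ 1/3 := by
    by_contra hc
    push_neg at hc
    have hz0 : z₀ ∉ E n := by
      intro hmem
      have := fZ_le_of_mem hmem
      rw [hphiz₀] at this
      linarith
    have hmem : z₀ ∈ symmDiff {z₀} ((E n).image (rhoZ α β 1)) := by
      rw [himg1, Finset.mem_symmDiff]
      exact Or.inl ⟨Finset.mem_singleton_self _, hz0⟩
    have hle := fZ_le_of_mem hmem
    rw [hphiz₀] at hle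
    have := (lt_div_iff₀ hm0).1 h1
    nlinarith
  -- Step B : analyze the minimizer
  have hne : (E n).Nonempty := by
    by_contra hc
    have : fZ (E n) = 1 := dif_neg hc
    linarith
  obtain ⟨z, hz, hzeq⟩ := fZ_eq_min hne
  cases z with
  | inl k => rw [hzeq] at hm3; norm_num [phiZ] at hm3
  | inr wp =>
    obtain ⟨w, hw⟩ := wp
    have hphi : phiZ (Sum.inr ⟨w, hw⟩) = ((3:ℝ) ^ w.toWord.length)⁻¹ := rfl
    rw [hphi] at hzeq
    have hL0 : w.toWord ≠ [] := by
      intro hnil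
      rw [hnil] at hzeq
      simp at hzeq
      linarith [hm3, hzeq ▸ hm3]
    have hw1 : w ≠ 1 := fun h => hL0 (by rw [h, FreeGroup.toWord_one])
    -- common tail: given the growth direction j, derive a contradiction
    have main : ∀ j : Fin 2, w.toWord.getLast? ≠ some (j, false) →
        (1:ℝ)/2 < fZ (symmDiff ∅ ((E n).image (rhoZ α β (FreeGroup.of j)))) / fZ (E n) →
        (∀ hwj : w * FreeGroup.of j ∈ Wset,
          rhoZ α β (FreeGroup.of j) (Sum.inr ⟨w, hw⟩) = Sum.inr ⟨w * FreeGroup.of j, hwj⟩) →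
        False := by
      intro j hlast hhalf hact
      obtain ⟨hwj, hlen⟩ := Wset_mul_of hw hL0 hlast
      have hmem : (Sum.inr ⟨w * FreeGroup.of j, hwj⟩ : ZS) ∈
          symmDiff ∅ ((E n).image (rhoZ α β (FreeGroup.of j))) := by
        apply Finset.mem_symmDiff.2
        refine Or.inr ⟨Finset.mem_image.2 ⟨_, hz, hact hwj⟩, Finset.notMem_empty _⟩
      have hle := fZ_le_of_mem hmem
      have hphi' : phiZ (Sum.inr ⟨w * FreeGroup.of j, hwj⟩)
          = ((3:ℝ) ^ (w.toWord.length + 1))⁻¹ := by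
        show ((3:ℝ) ^ (w * FreeGroup.of j).toWord.length)⁻¹ = _
        rw [hlen]
      rw [hphi'] at hle
      have hsplit : ((3:ℝ) ^ (w.toWord.length + 1))⁻¹ = fZ (E n) / 3 := by
        rw [hzeq, pow_succ]
        field_simp
      rw [hsplit] at hle
      have := (lt_div_iff₀ hm0).1 hhalf
      nlinarith
    -- last letter exists
    rcases hl : w.toWord.getLast? with _ | last
    · exact hL0 (List.getLast?_eq_none_iff.1 hl)
    by_cases hcase : last = ((0 : Fin 2), false)
    · refine main 1 ?_ hb ?_
      · rw [hl, hcase]; simp [Fin.ext_iff]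
      · intro hwj
        have hperm : rhoZ α β (FreeGroup.of 1) = β := by
          unfold rhoZ
          rw [FreeGroup.lift_apply_of]
          simp [Fin.ext_iff]
        rw [hperm]
        exact hβ2 w hw hwj
    · refine main 0 ?_ ha ?_
      · rw [hl]; simpa using hcase
      · intro hwj
        have hperm : rhoZ α β (FreeGroup.of 0) = α := by
          unfold rhoZ
          rw [FreeGroup.lift_apply_of]
          simp
        rw [hperm]
        exact hα3 w hw hw1 hwj
end

section
/- Let a group G act on a set X, let S be a finite nonempty subset of G, let w : G → ℝ be weights with w(s) ≥ 0 for s ∈ S and Σ_{s∈S} w(s) = 1, and let P be the operator Pf(x) = Σ_{s∈S} w(s)·f(s•x). Let f : X → ℝ be positive everywhere with Pf(x) ≤ f(x) for all x, let ε ∈ (0,1) and let n ≥ 1 be an integer such that Pⁿf(x) ≤ εⁿ·f(x) for all x ∈ X, where Pⁿ is the n-fold iterate of P. Then the function g = Σ_{i=0}^{n−1} ε^{−i}·P^{i}f is positive everywhere and satisfies Pg(x) ≤ ε·g(x) for all x ∈ X. -/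
/-- The Markov operator of the random walk on `X` induced by a finitely supported
probability measure `w` on `G`: `P f x = ∑_{s∈S} w(s)·f(s•x)`. -/
noncomputable def wAvgOp {G X : Type*} [Group G] [MulAction G X]
    (S : Finset G) (w : G → ℝ) (f : X → ℝ) : X → ℝ :=
  fun x => ∑ s ∈ S, w s * f (s • x)

/-- If `f > 0` is superharmonic and `Pⁿf ≤ εⁿ·f` for some `ε ∈ (0,1)` and `n ≥ 1`, then
`g = ∑_{i<n} ε^{−i}·Pⁱf` is positive and satisfies `Pg ≤ ε·g`. -/
theorem geometric_combination_subinvariant {G X : Type*} [Group G] [MulAction G X]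
    (S : Finset G) (hS : S.Nonempty)
    (w : G → ℝ) (hw : ∀ s ∈ S, 0 ≤ w s) (hw1 : ∑ s ∈ S, w s = 1)
    (f : X → ℝ) (hf : ∀ x, 0 < f x)
    (hsup : ∀ x, wAvgOp S w f x ≤ f x)
    (ε : ℝ) (hε : ε ∈ Set.Ioo (0 : ℝ) 1) (n : ℕ) (hn : 1 ≤ n)
    (hiter : ∀ x, (wAvgOp S w)^[n] f x ≤ ε ^ n * f x) :
    (∀ x, 0 < ∑ i ∈ Finset.range n, (ε ^ i)⁻¹ * (wAvgOp S w)^[i] f x) ∧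
      ∀ x, wAvgOp S w (fun y => ∑ i ∈ Finset.range n, (ε ^ i)⁻¹ * (wAvgOp S w)^[i] f y) x ≤
        ε * ∑ i ∈ Finset.range n, (ε ^ i)⁻¹ * (wAvgOp S w)^[i] f x := by
  obtain ⟨hε0, hε1⟩ := hε
  set P : (X → ℝ) → X → ℝ := wAvgOp S w with hP
  have hεne : ε ≠ 0 := ne_of_gt hε0
  -- P preserves nonnegativity
  have hPnn : ∀ (h : X → ℝ), (∀ x, 0 ≤ h x) → ∀ x, 0 ≤ P h x := by
    intro h hh x
    exact Finset.sum_nonneg fun s hs => mul_nonneg (hw s hs) (hh _)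
  have hiternn : ∀ i x, 0 ≤ P^[i] f x := by
    intro i
    induction i with
    | zero => exact fun x => (hf x).le
    | succ k ih =>
      intro x
      rw [Function.iterate_succ_apply']
      exact hPnn _ ih x
  constructor
  · intro x
    apply Finset.sum_pos' (fun i _ => mul_nonneg (by positivity) (hiternn i x))
    exact ⟨0, Finset.mem_range.mpr hn, by simpa using hf x⟩
  · intro x
    have key : P (fun y => ∑ i ∈ Finset.range n, (ε ^ i)⁻¹ * P^[i] f y) x
        = ∑ i ∈ Finset.range n, (ε ^ i)⁻¹ * P^[i + 1] f x := by
      simp only [hP, wAvgOp, Finset.mul_sum]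
      rw [Finset.sum_comm]
      refine Finset.sum_congr rfl fun i _ => ?_
      rw [Function.iterate_succ_apply', wAvgOp, Finset.mul_sum]
      exact Finset.sum_congr rfl fun s _ => by ring
    rw [key]
    have step : ∑ i ∈ Finset.range n, (ε ^ i)⁻¹ * P^[i + 1] f x
        = ε * ((∑ i ∈ Finset.range n, (ε ^ i)⁻¹ * P^[i] f x)
            + (ε ^ n)⁻¹ * P^[n] f x - f x) := by
      have h1 : ∑ i ∈ Finset.range (n + 1), (ε ^ i)⁻¹ * P^[i] f x
          = (∑ i ∈ Finset.range n, (ε ^ (i + 1))⁻¹ * P^[i + 1] f x)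
            + (ε ^ 0)⁻¹ * P^[0] f x := Finset.sum_range_succ' _ n
      have h2 : ∑ i ∈ Finset.range (n + 1), (ε ^ i)⁻¹ * P^[i] f x
          = (∑ i ∈ Finset.range n, (ε ^ i)⁻¹ * P^[i] f x)
            + (ε ^ n)⁻¹ * P^[n] f x := Finset.sum_range_succ _ n
      have h3 : ∑ i ∈ Finset.range n, (ε ^ i)⁻¹ * P^[i + 1] f x
          = ε * ∑ i ∈ Finset.range n, (ε ^ (i + 1))⁻¹ * P^[i + 1] f x := by
        rw [Finset.mul_sum]
        refine Finset.sum_congr rfl fun i _ => ?_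
        rw [pow_succ, mul_inv]
        field_simp
      rw [h3]
      have h4 : ∑ i ∈ Finset.range n, (ε ^ (i + 1))⁻¹ * P^[i + 1] f x
          = (∑ i ∈ Finset.range n, (ε ^ i)⁻¹ * P^[i] f x)
            + (ε ^ n)⁻¹ * P^[n] f x - f x := by
        have := h1.symm.trans h2
        simp only [pow_zero, inv_one, one_mul, Function.iterate_zero_apply] at this
        linarith
      rw [h4]
    rw [step]
    have hbd : (ε ^ n)⁻¹ * P^[n] f x ≤ f x := by
      rw [inv_mul_le_iff₀ (by positivity)]
      exact (hiter x).trans_eq (by ring)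
    nlinarith [hiter x, hf x]
end
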